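/- arXiv:math/0304469 — 7 statements merged into one kernel-verified Lean document; each statement's English description precedes it below -/
import Mathlib

section
/- If (π₀, π₁) is an admissible pair, then the pair ℛ₀(π₀,π₁) = (π₀, π̂₁), where π̂₁(α) = π₁(α) if π₁(α) ≤ π₁(α₀), π̂₁(α) = π₁(α)+1 if π₁(α₀) < π₁(α) < d, and π̂₁(α₁) = π₁(α₀)+1 (where π₀(α₀) = π₁(α₁) = d), is again an admissible pair of bijections. -/
open MeasureTheory Finset

/-- Combinatorial and metric data of an interval exchange map:
two maps `p0, p1 : A → Fin d` (0-indexed versions of the bijections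
`π₀, π₁ : A → {1,…,d}`) and lengths `len : A → ℝ`. -/
structure IEMData (A : Type) (d : ℕ) where
  p0 : A → Fin d
  p1 : A → Fin d
  len : A → ℝ

namespace IEM

variable {A : Type} [Fintype A] [DecidableEq A] {d : ℕ}

/-- Admissibility of the pair `(p0, p1)`: for all `1 ≤ k < d`, the
preimages of `{1,…,k}` under `π₀` and `π₁` differ. -/
def Admissible (p0 p1 : A → Fin d) : Prop :=
  ∀ k : ℕ, 0 < k → k < d → {α : A | (p0 α : ℕ) < k} ≠ {α : A | (p1 α : ℕ) < k}

/-- The data is that of a genuine interval exchange map: both maps are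
bijections, all lengths are positive, and the pair is admissible. -/
def GoodData (D : IEMData A d) : Prop :=
  Function.Bijective D.p0 ∧ Function.Bijective D.p1 ∧ (∀ α, 0 < D.len α) ∧
    Admissible D.p0 D.p1

/-- Left endpoint of the interval `I_α` (in the domain ordering `π₀`). -/
def leftPt0 (D : IEMData A d) (α : A) : ℝ :=
  ∑ β ∈ univ.filter (fun β => D.p0 β < D.p0 α), D.len β

/-- Left endpoint of the image interval of `I_α` (in the range ordering `π₁`). -/
def leftPt1 (D : IEMData A d) (α : A) : ℝ :=
  ∑ β ∈ univ.filter (fun β => D.p1 β < D.p1 α), D.len β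

/-- The interval `I_α = [Σ_{π₀β<π₀α} λ_β, Σ_{π₀β≤π₀α} λ_β)`. -/
def Iset (D : IEMData A d) (α : A) : Set ℝ :=
  Set.Ico (leftPt0 D α) (leftPt0 D α + D.len α)

/-- Total length `Σ_α λ_α`. -/
def totalLen (D : IEMData A d) : ℝ := ∑ α, D.len α

/-- `T` is the interval exchange map of the data `D`:
on each `I_α`, `T` translates by `leftPt1 D α - leftPt0 D α`, i.e.
`T(x + Σ_{π₀β<π₀α} λ_β) = x + Σ_{π₁β<π₁α} λ_β` for `0 ≤ x < λ_α`. -/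
def IsIEMOf (T : ℝ → ℝ) (D : IEMData A d) : Prop :=
  ∀ α : A, ∀ x ∈ Iset D α, T x = x - leftPt0 D α + leftPt1 D α

/-- Keane's condition: no orbit segment of `T` starts and ends at a
discontinuity (the nonzero left endpoints of the `I_α`). -/
def KeaneCond (T : ℝ → ℝ) (D : IEMData A d) : Prop :=
  ∀ n : ℕ, 1 ≤ n → ∀ α β : A, leftPt0 D α ≠ 0 → leftPt0 D β ≠ 0 →
    T^[n] (leftPt0 D α) ≠ leftPt0 D β

end IEM

open IEM in
/-- the Rauzy operation `ℛ₀` produces again an admissible pair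
of bijections.  Here `p0, p1 : A → Fin d` are the 0-indexed versions of
`π₀, π₁ : A → {1,…,d}` (so the value `d` corresponds to `d - 1`), and
`p1hat` is the 0-indexed version of `π̂₁`, specified through its values. -/
theorem rauzy_R0_admissible
    {A : Type} [Fintype A] [DecidableEq A] {d : ℕ}
    (hd : 2 ≤ d) (hcard : Fintype.card A = d)
    (p0 p1 : A → Fin d)
    (hb0 : Function.Bijective p0) (hb1 : Function.Bijective p1)
    (hadm : IEM.Admissible p0 p1)
    (a0 a1 : A) (ha0 : (p0 a0 : ℕ) = d - 1) (ha1 : (p1 a1 : ℕ) = d - 1)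
    (p1hat : A → Fin d)
    (hhat : ∀ α, (p1hat α : ℕ) =
      if α = a1 then (p1 a0 : ℕ) + 1
      else if (p1 α : ℕ) ≤ (p1 a0 : ℕ) then (p1 α : ℕ)
      else (p1 α : ℕ) + 1) :
    Function.Bijective p1hat ∧ IEM.Admissible p0 p1hat := by
  -- a0 ≠ a1
  have hne : a0 ≠ a1 := by
    intro h
    apply hadm (d - 1) (by omega) (by omega)
    ext α
    simp only [Set.mem_setOf_eq]
    constructor
    · intro hα
      have h0 : (p1 α : ℕ) ≠ d - 1 := by
        intro hv
        have : p1 α = p1 a1 := Fin.val_injective (by rw [hv, ha1])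
        have : α = a1 := hb1.1 this
        subst this; subst h
        omega
      have := (p1 α).isLt
      omega
    · intro hα
      have h0 : (p0 α : ℕ) ≠ d - 1 := by
        intro hv
        have : p0 α = p0 a0 := Fin.val_injective (by rw [hv, ha0])
        have : α = a0 := hb0.1 this
        subst this; subst h
        omega
      have := (p0 α).isLt
      omega
  have key : (p1 a0 : ℕ) < d - 1 := by
    have h0 : (p1 a0 : ℕ) ≠ d - 1 := by
      intro hv
      exact hne (hb1.1 (Fin.val_injective (by rw [hv, ha1])))
    have := (p1 a0).isLt
    omega
  have hinj : Function.Injective p1hat := by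
    intro α β h
    have h' : (p1hat α : ℕ) = (p1hat β : ℕ) := congrArg _ h
    rw [hhat, hhat] at h'
    by_cases hα : α = a1 <;> by_cases hβ : β = a1
    · rw [hα, hβ]
    · rw [if_pos hα, if_neg hβ] at h'
      split_ifs at h' <;> omega
    · rw [if_neg hα, if_pos hβ] at h'
      split_ifs at h' <;> omega
    · rw [if_neg hα, if_neg hβ] at h'
      split_ifs at h' with h1 h2 h3
      · exact hb1.1 (Fin.val_injective h')
      · omega
      · omega
      · exact hb1.1 (Fin.val_injective (by omega))
  constructor
  · rw [Fintype.bijective_iff_injective_and_card]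
    exact ⟨hinj, by simp [hcard]⟩
  · intro k hk0 hkd heq
    by_cases hk : k ≤ (p1 a0 : ℕ) + 1
    · have hS : {α : A | (p1hat α : ℕ) < k} = {α : A | (p1 α : ℕ) < k} := by
        ext α
        simp only [Set.mem_setOf_eq]
        rw [hhat]
        split_ifs with h1 h2
        · subst h1; omega
        · rfl
        · omega
      rw [hS] at heq
      exact hadm k hk0 hkd heq
    · have h1 : a0 ∈ {α : A | (p1hat α : ℕ) < k} := by
        simp only [Set.mem_setOf_eq]
        rw [hhat, if_neg hne, if_pos (le_refl _)]
        omega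
      have h2 : a0 ∉ {α : A | (p0 α : ℕ) < k} := by
        simp only [Set.mem_setOf_eq, ha0]
        omega
      rw [heq] at h2
      exact h2 h1
end

section
/- If (π₀, π₁) is an admissible pair, then the pair ℛ₁(π₀,π₁) = (π̂₀, π₁), where π̂₀(α) = π₀(α) if π₀(α) ≤ π₀(α₁), π̂₀(α) = π₀(α)+1 if π₀(α₁) < π₀(α) < d, and π̂₀(α₀) = π₀(α₁)+1, is again an admissible pair of bijections, and moreover π̂₀ is indeed a bijection onto {1,…,d}. -/
open MeasureTheory Finset

open IEM in
/-- the Rauzy operation `ℛ₁` produces again an admissible pair,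
and the modified map `π̂₀` is indeed a bijection onto `{1,…,d}`.
Here `p0, p1 : A → Fin d` are the 0-indexed versions of `π₀, π₁`, and
`p0hat` is the 0-indexed version of `π̂₀`, specified through its values. -/
theorem rauzy_R1_admissible
    {A : Type} [Fintype A] [DecidableEq A] {d : ℕ}
    (hd : 2 ≤ d) (hcard : Fintype.card A = d)
    (p0 p1 : A → Fin d)
    (hb0 : Function.Bijective p0) (hb1 : Function.Bijective p1)
    (hadm : IEM.Admissible p0 p1)
    (a0 a1 : A) (ha0 : (p0 a0 : ℕ) = d - 1) (ha1 : (p1 a1 : ℕ) = d - 1)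
    (p0hat : A → Fin d)
    (hhat : ∀ α, (p0hat α : ℕ) =
      if α = a0 then (p0 a1 : ℕ) + 1
      else if (p0 α : ℕ) ≤ (p0 a1 : ℕ) then (p0 α : ℕ)
      else (p0 α : ℕ) + 1) :
    Function.Bijective p0hat ∧ IEM.Admissible p0hat p1 := by
  -- basic facts
  have hinj0 : ∀ γ δ : A, (p0 γ : ℕ) = (p0 δ : ℕ) → γ = δ :=
    fun γ δ hh => hb0.1 (Fin.val_injective hh)
  have hinj1 : ∀ γ δ : A, (p1 γ : ℕ) = (p1 δ : ℕ) → γ = δ :=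
    fun γ δ hh => hb1.1 (Fin.val_injective hh)
  have hlt0 : ∀ α : A, (p0 α : ℕ) < d := fun α => (p0 α).isLt
  have hlt1 : ∀ α : A, (p1 α : ℕ) < d := fun α => (p1 α).isLt
  have e0 : ∀ α : A, (p0 α : ℕ) < d - 1 ↔ α ≠ a0 := by
    intro α
    constructor
    · intro hl hc; subst hc; omega
    · intro hc
      have h1 : (p0 α : ℕ) ≠ d - 1 := fun he => hc (hinj0 α a0 (by omega))
      have := hlt0 α; omega
  have e1 : ∀ α : A, (p1 α : ℕ) < d - 1 ↔ α ≠ a1 := by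
    intro α
    constructor
    · intro hl hc; subst hc; omega
    · intro hc
      have h1 : (p1 α : ℕ) ≠ d - 1 := fun he => hc (hinj1 α a1 (by omega))
      have := hlt1 α; omega
  have hne : a1 ≠ a0 := by
    intro h
    apply hadm (d - 1) (by omega) (by omega)
    ext α
    simp only [Set.mem_setOf_eq, e0 α, e1 α, h]
  have hm : (p0 a1 : ℕ) < d - 1 := by
    have h1 : (p0 a1 : ℕ) ≠ d - 1 := fun h => hne (hinj0 a1 a0 (by omega))
    have := hlt0 a1; omega
  set m : ℕ := (p0 a1 : ℕ) with hmdef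
  have hα0 : ∀ α : A, α ≠ a0 → (p0 α : ℕ) < d - 1 := by
    intro α hα
    have h1 : (p0 α : ℕ) ≠ d - 1 := fun h => hα (hinj0 α a0 (by omega))
    have := hlt0 α; omega
  constructor
  · -- bijectivity
    rw [Fintype.bijective_iff_injective_and_card]
    refine ⟨?_, by simp [hcard]⟩
    intro α β h
    have hv : (p0hat α : ℕ) = (p0hat β : ℕ) := by rw [h]
    rw [hhat α, hhat β] at hv
    by_cases hα : α = a0 <;> by_cases hβ : β = a0
    · rw [hα, hβ]
    · rw [if_pos hα, if_neg hβ] at hv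
      by_cases hβm : (p0 β : ℕ) ≤ m
      · rw [if_pos hβm] at hv
        have : β = a1 := hinj0 β a1 (by omega)
        subst this; omega
      · rw [if_neg hβm] at hv
        have : β = a1 := hinj0 β a1 (by omega)
        subst this; omega
    · rw [if_neg hα, if_pos hβ] at hv
      by_cases hαm : (p0 α : ℕ) ≤ m
      · rw [if_pos hαm] at hv
        have : α = a1 := hinj0 α a1 (by omega)
        subst this; omega
      · rw [if_neg hαm] at hv
        have : α = a1 := hinj0 α a1 (by omega)
        subst this; omega
    · rw [if_neg hα, if_neg hβ] at hv
      by_cases hαm : (p0 α : ℕ) ≤ m <;> by_cases hβm : (p0 β : ℕ) ≤ m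
      · rw [if_pos hαm, if_pos hβm] at hv; exact hinj0 α β hv
      · rw [if_pos hαm, if_neg hβm] at hv; omega
      · rw [if_neg hαm, if_pos hβm] at hv; omega
      · rw [if_neg hαm, if_neg hβm] at hv; exact hinj0 α β (by omega)
  · -- admissibility
    intro k hk0 hkd h
    by_cases hk : k ≤ m + 1
    · have heq : {α : A | (p0hat α : ℕ) < k} = {α : A | (p0 α : ℕ) < k} := by
        ext α
        simp only [Set.mem_setOf_eq]
        rw [hhat α]
        by_cases h1 : α = a0
        · rw [if_pos h1, h1, ha0]; omega
        · rw [if_neg h1]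
          by_cases h2 : (p0 α : ℕ) ≤ m
          · rw [if_pos h2]
          · rw [if_neg h2]; omega
      exact hadm k hk0 hkd (heq ▸ h)
    · have h1 : a1 ∈ {α : A | (p0hat α : ℕ) < k} := by
        simp only [Set.mem_setOf_eq]
        rw [hhat a1, if_neg hne, if_pos le_rfl]
        omega
      have h2 : a1 ∉ {α : A | (p1 α : ℕ) < k} := by
        simp only [Set.mem_setOf_eq, ha1]
        omega
      rw [h] at h1
      exact h2 h1
end

section
/- Let T be an interval exchange map with admissible data (π₀,π₁), (λ_α), and suppose T is of type ε, i.e. λ_{α_ε} > λ_{α_{1-ε}} where π_ε(α_ε) = d. Then the first return map of T to the interval [0, Σ_{α ≠ α_{1-ε}} λ_α) is the interval exchange map with combinatorial data ℛ_ε(π₀,π₁) and lengths λ̂_α = λ_α for α ≠ α_ε, λ̂_{α_ε} = λ_{α_ε} − λ_{α_{1-ε}}. -/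
open MeasureTheory Finset

section Helpers
variable {A : Type} [Fintype A] [DecidableEq A] {d : ℕ}

lemma filter_top_eq_erase (p : A → Fin d) (hp : Function.Injective p) (u : A)
    (hu : (p u : ℕ) = d - 1) :
    univ.filter (fun β => p β < p u) = univ.erase u := by
  ext β
  simp only [mem_filter, mem_univ, true_and, mem_erase, and_true, Fin.lt_def, hu]
  constructor
  · intro h hβu; rw [hβu, hu] at h; omega
  · intro h
    have h1 : (p β : ℕ) < d := (p β).isLt
    have h2 : (p β : ℕ) ≠ d - 1 := by
      intro he
      exact h (hp (Fin.val_injective (by rw [he, hu])))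
    omega

lemma sum_update_kept (q : A → Fin d) (w : A) (hqw : (q w : ℕ) = d - 1)
    (l : A → ℝ) (c : ℝ) (α : A) :
    ∑ β ∈ univ.filter (fun β => q β < q α), Function.update l w c β
      = ∑ β ∈ univ.filter (fun β => q β < q α), l β := by
  refine Finset.sum_congr rfl fun β hβ => ?_
  simp only [mem_filter, Fin.lt_def] at hβ
  have hβw : β ≠ w := by
    intro h; subst h
    have := (q α).isLt
    omega
  simp [Function.update_apply, hβw]

lemma sum_update_hat (p p' : A → Fin d) (hp : Function.Injective p)
    (w u : A) (hwu : u ≠ w) (hpu : (p u : ℕ) = d - 1)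
    (hhat : ∀ α, ((p' α : ℕ)) =
      if α = u then (p w : ℕ) + 1
      else if (p α : ℕ) ≤ (p w : ℕ) then (p α : ℕ) else (p α : ℕ) + 1)
    (l : A → ℝ) (α : A) :
    ∑ β ∈ univ.filter (fun β => p' β < p' α), Function.update l w (l w - l u) β =
      if α = u then (∑ β ∈ univ.filter (fun β => p β < p w), l β) + (l w - l u)
      else ∑ β ∈ univ.filter (fun β => p β < p α), l β := by
  have hdw : (p w : ℕ) < d - 1 := by
    have h1 := (p w).isLt
    have h2 : (p w : ℕ) ≠ d - 1 := by
      intro he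
      exact hwu (hp (Fin.val_injective (by rw [he, hpu]))).symm
    omega
  by_cases hau : α = u
  · rw [if_pos hau]
    have hset : univ.filter (fun β => p' β < p' α)
        = insert w (univ.filter (fun β => p β < p w)) := by
      ext β
      simp only [mem_filter, mem_univ, true_and, mem_insert, Fin.lt_def,
        hhat β, hhat α, if_pos hau]
      have hbw : β = w ↔ (p β : ℕ) = (p w : ℕ) :=
        ⟨fun h => by rw [h], fun h => hp (Fin.val_injective h)⟩
      rw [hbw]
      by_cases hβ : β = u
      · have hv : (p β : ℕ) = d - 1 := by rw [hβ, hpu]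
        rw [if_pos hβ]; omega
      · rw [if_neg hβ]; split_ifs <;> omega
    have hwmem : w ∉ univ.filter (fun β => p β < p w) := by
      simp only [mem_filter, mem_univ, true_and, Fin.lt_def]
      omega
    rw [hset, Finset.sum_insert hwmem, Function.update_self]
    have heq : ∑ β ∈ univ.filter (fun β => p β < p w), Function.update l w (l w - l u) β
        = ∑ β ∈ univ.filter (fun β => p β < p w), l β := by
      refine Finset.sum_congr rfl fun β hβ => ?_
      simp only [mem_filter, Fin.lt_def] at hβ
      have : β ≠ w := by intro h; subst h; omega
      simp [Function.update_apply, this]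
    rw [heq]; ring
  · rw [if_neg hau]
    have hvu : (p α : ℕ) < d - 1 := by
      have h1 := (p α).isLt
      have h2 : (p α : ℕ) ≠ d - 1 := by
        intro he
        exact hau (hp (Fin.val_injective (by rw [he, hpu])))
      omega
    by_cases hle : (p α : ℕ) ≤ (p w : ℕ)
    · have hset : univ.filter (fun β => p' β < p' α)
          = univ.filter (fun β => p β < p α) := by
        ext β
        simp only [mem_filter, mem_univ, true_and, Fin.lt_def,
          hhat β, hhat α, if_neg hau, if_pos hle]
        by_cases hβ : β = u
        · have hv : (p β : ℕ) = d - 1 := by rw [hβ, hpu]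
          rw [if_pos hβ]; omega
        · rw [if_neg hβ]; split_ifs <;> omega
      rw [hset]
      refine Finset.sum_congr rfl fun β hβ => ?_
      simp only [mem_filter, Fin.lt_def] at hβ
      have : β ≠ w := by
        intro h; subst h; omega
      simp [Function.update_apply, this]
    · push_neg at hle
      have hset : univ.filter (fun β => p' β < p' α)
          = insert u (univ.filter (fun β => p β < p α)) := by
        ext β
        simp only [mem_filter, mem_univ, true_and, mem_insert, Fin.lt_def,
          hhat β, hhat α, if_neg hau, if_neg (not_le.mpr hle)]
        by_cases hβ : β = u
        · have hv : (p β : ℕ) = d - 1 := by rw [hβ, hpu]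
          rw [if_pos hβ]
          simp only [hβ, true_or, iff_true]
          omega
        · rw [if_neg hβ]
          simp only [hβ, false_or]
          split_ifs <;> omega
      have humem : u ∉ univ.filter (fun β => p β < p α) := by
        simp only [mem_filter, mem_univ, true_and, Fin.lt_def, hpu]
        omega
      have hwmem : w ∈ univ.filter (fun β => p β < p α) := by
        simp only [mem_filter, mem_univ, true_and, Fin.lt_def]
        omega
      rw [hset, Finset.sum_insert humem, Function.update_apply, if_neg hwu,
        Finset.sum_update_of_mem hwmem,
        Finset.sum_eq_sum_sdiff_singleton_add hwmem l]
      ring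

lemma leftPt_add_le (p : A → Fin d) (l : A → ℝ) (hl : ∀ β, 0 ≤ l β)
    {α u : A} (h : (p α : ℕ) < (p u : ℕ)) :
    (∑ β ∈ univ.filter (fun β => p β < p α), l β) + l α
      ≤ ∑ β ∈ univ.filter (fun β => p β < p u), l β := by
  have hα : α ∉ univ.filter (fun β => p β < p α) := by
    simp only [mem_filter, mem_univ, true_and, Fin.lt_def]
    omega
  rw [add_comm, ← Finset.sum_insert hα]
  refine Finset.sum_le_sum_of_subset_of_nonneg ?_ (fun β _ _ => hl β)
  intro β hβ
  simp only [mem_insert, mem_filter, mem_univ, true_and, Fin.lt_def] at *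
  rcases hβ with h1 | h1
  · subst h1; exact h
  · omega

end Helpers


open IEM Finset in
/-- if `T` is of type `ε` (i.e. `λ_{α_ε} > λ_{α_{1-ε}}`, the
winner being `w = α_ε` with `π_ε(w) = d` and the loser `u = α_{1-ε}` with
`π_{1-ε}(u) = d`), then the first return map of `T` to
`[0, Σ_{α ≠ u} λ_α)` is the interval exchange map with combinatorial data
`ℛ_ε(π₀,π₁)` and lengths `λ̂_α = λ_α` for `α ≠ w`, `λ̂_w = λ_w − λ_u`.
The new data is `D'`; the Boolean `ε` selects which of the two orderings
is modified by the Rauzy operation. -/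
theorem rauzy_veech_first_return
    {A : Type} [Fintype A] [DecidableEq A] {d : ℕ}
    (hd : 2 ≤ d) (hcard : Fintype.card A = d)
    (D : IEMData A d) (hD : GoodData D)
    (T : ℝ → ℝ) (hT : IsIEMOf T D)
    (ε : Bool) (w u : A)
    (hw : ((if ε then D.p1 else D.p0) w : ℕ) = d - 1)
    (hu : ((if ε then D.p0 else D.p1) u : ℕ) = d - 1)
    (htype : D.len u < D.len w)
    (D' : IEMData A d)
    (hlen' : D'.len = Function.update D.len w (D.len w - D.len u))
    (hkeep : (if ε then D'.p1 else D'.p0) = (if ε then D.p1 else D.p0))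
    (hhat : ∀ α, (((if ε then D'.p0 else D'.p1) α : ℕ)) =
      if α = u then ((if ε then D.p0 else D.p1) w : ℕ) + 1
      else if ((if ε then D.p0 else D.p1) α : ℕ) ≤ ((if ε then D.p0 else D.p1) w : ℕ)
        then ((if ε then D.p0 else D.p1) α : ℕ)
      else ((if ε then D.p0 else D.p1) α : ℕ) + 1) :
    ∀ α : A, ∀ x ∈ Iset D' α, ∃ n : ℕ, 0 < n ∧
      (∀ k : ℕ, 0 < k → k < n →
        T^[k] x ∉ Set.Ico (0 : ℝ) (∑ β ∈ univ.erase u, D.len β)) ∧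
      T^[n] x ∈ Set.Ico (0 : ℝ) (∑ β ∈ univ.erase u, D.len β) ∧
      T^[n] x = x - leftPt0 D' α + leftPt1 D' α := by
  obtain ⟨hp0, hp1, hpos, -⟩ := hD
  have hlnn : ∀ β, 0 ≤ D.len β := fun β => (hpos β).le
  have huw : u ≠ w := fun h => absurd htype (by rw [h]; exact lt_irrefl _)
  have hwu : w ≠ u := huw.symm
  intro α x hx
  simp only [IEM.Iset, Set.mem_Ico] at hx
  obtain ⟨hx1, hx2⟩ := hx
  cases ε with
  | false =>
    simp only [Bool.false_eq_true, if_false] at hw hu hkeep hhat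
    -- hw : (D.p0 w : ℕ) = d - 1, hu : (D.p1 u : ℕ) = d - 1
    have hLa0 : ∀ γ, leftPt0 D' γ = leftPt0 D γ := by
      intro γ
      simp only [IEM.leftPt0, hkeep, hlen']
      exact sum_update_kept D.p0 w hw D.len _ γ
    have hLa1 : ∀ γ, leftPt1 D' γ =
        if γ = u then leftPt1 D w + (D.len w - D.len u) else leftPt1 D γ := by
      intro γ
      simp only [IEM.leftPt1, hlen']
      exact sum_update_hat D.p1 D'.p1 hp1.1 w u huw hu hhat D.len γ
    have hp1lt : ∀ γ, γ ≠ u → (D.p1 γ : ℕ) < (D.p1 u : ℕ) := by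
      intro γ hγ
      have h1 := (D.p1 γ).isLt
      have h2 : (D.p1 γ : ℕ) ≠ d - 1 := fun he =>
        hγ (hp1.1 (Fin.val_injective (by rw [he, hu])))
      rw [hu]; omega
    have hbound : ∀ γ, γ ≠ u → leftPt1 D γ + D.len γ ≤ leftPt1 D u := fun γ hγ =>
      leftPt_add_le D.p1 D.len hlnn (hp1lt γ hγ)
    have hnn1 : ∀ γ, 0 ≤ leftPt1 D γ := fun γ => Finset.sum_nonneg fun β _ => hlnn β
    have hLuE : ∑ β ∈ univ.erase u, D.len β = leftPt1 D u := by
      rw [IEM.leftPt1, filter_top_eq_erase D.p1 hp1.1 u hu]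
    have hIw0 : leftPt0 D w = ∑ β ∈ univ.erase w, D.len β := by
      rw [IEM.leftPt0, filter_top_eq_erase D.p0 hp0.1 w hw]
    have hw0 : leftPt0 D w + D.len w = ∑ β, D.len β := by
      rw [hIw0]; exact Finset.sum_erase_add univ D.len (mem_univ w)
    have hu1 : leftPt1 D u + D.len u = ∑ β, D.len β := by
      rw [← hLuE]; exact Finset.sum_erase_add univ D.len (mem_univ u)
    rw [hLa0 α] at hx1 hx2
    by_cases hα : α = u
    · -- n = 2
      subst hα
      rw [hlen', Function.update_apply, if_neg huw] at hx2
      have hT1 : T x = x - leftPt0 D α + leftPt1 D α :=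
        hT α x (Set.mem_Ico.mpr ⟨hx1, hx2⟩)
      have hTIlo : leftPt0 D w ≤ T x := by
        rw [hT1]; linarith
      have hTIhi : T x < leftPt0 D w + D.len w := by
        rw [hT1]; linarith
      have hT2 : T (T x) = T x - leftPt0 D w + leftPt1 D w :=
        hT w (T x) (Set.mem_Ico.mpr ⟨hTIlo, hTIhi⟩)
      have hT2x : T (T x) = x - leftPt0 D α + leftPt1 D α - leftPt0 D w + leftPt1 D w := by
        rw [hT2, hT1]
      have hit2 : T^[2] x = T (T x) := by
        rw [show (2:ℕ) = 1 + 1 from rfl, Function.iterate_add_apply, Function.iterate_one]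
      have hbw := hbound w hwu
      refine ⟨2, by norm_num, ?_, ?_, ?_⟩
      · intro k hk1 hk2
        have hk : k = 1 := by omega
        subst hk
        simp only [Function.iterate_one, Set.mem_Ico, not_and, not_lt]
        intro _
        rw [hLuE, hT1]; linarith
      · rw [hit2, hT2x, Set.mem_Ico, hLuE]
        constructor
        · linarith [hnn1 w]
        · linarith
      · rw [hit2, hT2x, hLa0 α, hLa1 α, if_pos rfl]
        linarith
    · -- n = 1
      have hlen'α : D'.len α ≤ D.len α := by
        rw [hlen', Function.update_apply]
        split_ifs with h
        · rw [h]; linarith [hlnn u]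
        · exact le_refl _
      have hT1 : T x = x - leftPt0 D α + leftPt1 D α :=
        hT α x (Set.mem_Ico.mpr ⟨hx1, by linarith⟩)
      refine ⟨1, one_pos, fun k hk1 hk2 => absurd hk2 (by omega), ?_, ?_⟩
      · simp only [Function.iterate_one, Set.mem_Ico, hLuE, hT1]
        constructor
        · linarith [hnn1 α]
        · linarith [hbound α hα]
      · simp only [Function.iterate_one, hT1, hLa0 α, hLa1 α, if_neg hα]
  | true =>
    simp only [if_true] at hw hu hkeep hhat
    -- hw : (D.p1 w : ℕ) = d - 1, hu : (D.p0 u : ℕ) = d - 1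
    have hLa1 : ∀ γ, leftPt1 D' γ = leftPt1 D γ := by
      intro γ
      simp only [IEM.leftPt1, hkeep, hlen']
      exact sum_update_kept D.p1 w hw D.len _ γ
    have hLa0 : ∀ γ, leftPt0 D' γ =
        if γ = u then leftPt0 D w + (D.len w - D.len u) else leftPt0 D γ := by
      intro γ
      simp only [IEM.leftPt0, hlen']
      exact sum_update_hat D.p0 D'.p0 hp0.1 w u huw hu hhat D.len γ
    have hp1lt : ∀ γ, γ ≠ w → (D.p1 γ : ℕ) < (D.p1 w : ℕ) := by
      intro γ hγ
      have h1 := (D.p1 γ).isLt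
      have h2 : (D.p1 γ : ℕ) ≠ d - 1 := fun he =>
        hγ (hp1.1 (Fin.val_injective (by rw [he, hw])))
      rw [hw]; omega
    have hbound : ∀ γ, γ ≠ w → leftPt1 D γ + D.len γ ≤ leftPt1 D w := fun γ hγ =>
      leftPt_add_le D.p1 D.len hlnn (hp1lt γ hγ)
    have hnn1 : ∀ γ, 0 ≤ leftPt1 D γ := fun γ => Finset.sum_nonneg fun β _ => hlnn β
    have hLuE : ∑ β ∈ univ.erase u, D.len β = leftPt0 D u := by
      rw [IEM.leftPt0, filter_top_eq_erase D.p0 hp0.1 u hu]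
    have hw1 : leftPt1 D w = ∑ β ∈ univ.erase w, D.len β := by
      rw [IEM.leftPt1, filter_top_eq_erase D.p1 hp1.1 w hw]
    have hw0 : leftPt1 D w + D.len w = ∑ β, D.len β := by
      rw [hw1]; exact Finset.sum_erase_add univ D.len (mem_univ w)
    have hu1 : leftPt0 D u + D.len u = ∑ β, D.len β := by
      rw [← hLuE]; exact Finset.sum_erase_add univ D.len (mem_univ u)
    by_cases hα : α = u
    · -- n = 2
      subst hα
      rw [hLa0 α, if_pos rfl] at hx1 hx2
      rw [hlen', Function.update_apply, if_neg huw] at hx2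
      have hxIw : x ∈ IEM.Iset D w := Set.mem_Ico.mpr ⟨by linarith, by linarith⟩
      have hT1 : T x = x - leftPt0 D w + leftPt1 D w := hT w x hxIw
      have hTIlo : leftPt0 D α ≤ T x := by
        rw [hT1]; linarith
      have hTIhi : T x < leftPt0 D α + D.len α := by
        rw [hT1]; linarith
      have hT2 : T (T x) = T x - leftPt0 D α + leftPt1 D α :=
        hT α (T x) (Set.mem_Ico.mpr ⟨hTIlo, hTIhi⟩)
      have hT2x : T (T x) = x - leftPt0 D w + leftPt1 D w - leftPt0 D α + leftPt1 D α := by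
        rw [hT2, hT1]
      have hit2 : T^[2] x = T (T x) := by
        rw [show (2:ℕ) = 1 + 1 from rfl, Function.iterate_add_apply, Function.iterate_one]
      have hba := hbound α huw
      refine ⟨2, by norm_num, ?_, ?_, ?_⟩
      · intro k hk1 hk2
        have hk : k = 1 := by omega
        subst hk
        simp only [Function.iterate_one, Set.mem_Ico, not_and, not_lt]
        intro _
        rw [hLuE, hT1]; linarith
      · rw [hit2, hT2x, Set.mem_Ico, hLuE]
        constructor
        · linarith [hnn1 α]
        · linarith
      · rw [hit2, hT2x, hLa0 α, if_pos rfl, hLa1 α]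
        linarith
    · -- n = 1
      rw [hLa0 α, if_neg hα] at hx1 hx2
      have hlen'α : D'.len α ≤ D.len α := by
        rw [hlen', Function.update_apply]
        split_ifs with h
        · rw [h]; linarith [hlnn u]
        · exact le_refl _
      have hT1 : T x = x - leftPt0 D α + leftPt1 D α :=
        hT α x (Set.mem_Ico.mpr ⟨hx1, by linarith⟩)
      refine ⟨1, one_pos, fun k hk1 hk2 => absurd hk2 (by omega), ?_, ?_⟩
      · simp only [Function.iterate_one, Set.mem_Ico, hLuE, hT1]
        constructor
        · linarith [hnn1 α]
        · -- T x < leftPt0 D u = S - len u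
          by_cases hαw : α = w
          · subst hαw
            have : D'.len α = D.len α - D.len u := by
              rw [hlen', Function.update_self]
            rw [this] at hx2
            linarith
          · linarith [hbound α hαw, hpos u, hlen'α]
      · simp only [Function.iterate_one, hT1, hLa0 α, hLa1 α, if_neg hα]
end

section
/- Let T be a minimal interval exchange map on [0,1). If Φ : [0,1) → ℝ is such that the Birkhoff sums Σ_{i=0}^{N-1} Φ(T^i(x₀)) at some point x₀ are bounded uniformly in N, and Φ is continuous on each interval I_α with one-sided limits at the endpoints, then there exists a bounded function Ψ : [0,1) → ℝ with Ψ − Ψ∘T = Φ. -/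
open MeasureTheory Finset

/- ====================  Auxiliary lemmas  ==================== -/

namespace IEM

variable {A : Type} [Fintype A] [DecidableEq A] {d : ℕ} {D : IEMData A d}

lemma leftPt0_nonneg (hlen : ∀ α, 0 < D.len α) (α : A) : 0 ≤ leftPt0 D α :=
  Finset.sum_nonneg fun β _ => (hlen β).le

lemma leftPt1_nonneg (hlen : ∀ α, 0 < D.len α) (α : A) : 0 ≤ leftPt1 D α :=
  Finset.sum_nonneg fun β _ => (hlen β).le

lemma leftPt0_add_le (hlen : ∀ α, 0 < D.len α) (hone : totalLen D = 1) (α : A) :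
    leftPt0 D α + D.len α ≤ 1 := by
  have hnm : α ∉ univ.filter (fun β => D.p0 β < D.p0 α) := by simp
  have : leftPt0 D α + D.len α
      = ∑ β ∈ insert α (univ.filter (fun β => D.p0 β < D.p0 α)), D.len β := by
    rw [Finset.sum_insert hnm, leftPt0]; ring
  rw [this, ← hone, totalLen]
  exact Finset.sum_le_sum_of_subset_of_nonneg (by intro b _; simp)
    (fun β _ _ => (hlen β).le)

lemma leftPt1_add_le (hlen : ∀ α, 0 < D.len α) (hone : totalLen D = 1) (α : A) :
    leftPt1 D α + D.len α ≤ 1 := by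
  have hnm : α ∉ univ.filter (fun β => D.p1 β < D.p1 α) := by simp
  have : leftPt1 D α + D.len α
      = ∑ β ∈ insert α (univ.filter (fun β => D.p1 β < D.p1 α)), D.len β := by
    rw [Finset.sum_insert hnm, leftPt1]; ring
  rw [this, ← hone, totalLen]
  exact Finset.sum_le_sum_of_subset_of_nonneg (by intro b _; simp)
    (fun β _ _ => (hlen β).le)

lemma covers (hbij : Function.Bijective D.p0) (hlen : ∀ α, 0 < D.len α)
    (hone : totalLen D = 1) {x : ℝ} (hx : x ∈ Set.Ico (0:ℝ) 1) :
    ∃ α, x ∈ Iset D α := by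
  have hdpos : 0 < d := by
    rcases Nat.eq_zero_or_pos d with h | h
    · exfalso
      have : (Finset.univ : Finset A) = ∅ := by
        apply Finset.eq_empty_of_forall_notMem
        intro a _
        subst h; exact Nat.not_lt_zero _ (D.p0 a).2
      rw [totalLen, this, Finset.sum_empty] at hone
      norm_num at hone
    · exact h
  obtain ⟨α₀, hα₀⟩ := hbij.2 ⟨0, hdpos⟩
  have hl0 : leftPt0 D α₀ = 0 := by
    rw [leftPt0]
    apply Finset.sum_eq_zero
    intro β hβ
    simp only [Finset.mem_filter, hα₀] at hβ
    exact absurd hβ.2 (by simp [Fin.lt_def])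
  set s := univ.filter (fun α => leftPt0 D α ≤ x) with hs
  have hne : s.Nonempty := ⟨α₀, by
    simp only [hs, Finset.mem_filter, Finset.mem_univ, true_and, hl0]
    exact hx.1⟩
  obtain ⟨α, hαs, hmax⟩ := Finset.exists_max_image s (leftPt0 D) hne
  have hαle : leftPt0 D α ≤ x := by simpa [hs] using hαs
  refine ⟨α, hαle, ?_⟩
  by_contra hcon
  push_neg at hcon
  rcases lt_or_eq_of_le (Nat.succ_le_of_lt (D.p0 α).2) with hk | hk
  · obtain ⟨α', hα'⟩ := hbij.2 ⟨(D.p0 α : ℕ) + 1, hk⟩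
    have hfilt : univ.filter (fun β => D.p0 β < D.p0 α')
        = insert α (univ.filter (fun β => D.p0 β < D.p0 α)) := by
      ext β
      simp only [Finset.mem_filter, Finset.mem_univ, true_and, Finset.mem_insert,
        Fin.lt_def, hα']
      constructor
      · intro h
        rcases Nat.lt_succ_iff_lt_or_eq.1 h with h' | h'
        · exact Or.inr h'
        · exact Or.inl (hbij.1 (Fin.ext h'))
      · rintro (rfl | h)
        · exact Nat.lt_succ_self _
        · exact Nat.lt_succ_of_lt h
    have hval : leftPt0 D α' = leftPt0 D α + D.len α := by
      rw [leftPt0, hfilt, Finset.sum_insert (by simp), leftPt0]; ring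
    have hmem' : α' ∈ s := by
      simp only [hs, Finset.mem_filter, Finset.mem_univ, true_and]
      rw [hval]; exact hcon
    have := hmax α' hmem'
    rw [hval] at this
    linarith [hlen α]
  · have hfilt : univ.filter (fun β => D.p0 β < D.p0 α) = univ.erase α := by
      ext β
      simp only [Finset.mem_filter, Finset.mem_univ, true_and, Finset.mem_erase,
        and_true, Fin.lt_def]
      constructor
      · intro h hq; subst hq; exact lt_irrefl _ h
      · intro h
        have h1 : (D.p0 β : ℕ) < d := (D.p0 β).2
        have h1' : (D.p0 β : ℕ) ≤ (D.p0 α : ℕ) := by omega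
        rcases lt_or_eq_of_le h1' with h2 | h2
        · exact h2
        · exact absurd (hbij.1 (Fin.ext h2)) h
    have : leftPt0 D α + D.len α = 1 := by
      rw [leftPt0, hfilt, ← hone, totalLen]
      exact Finset.sum_erase_add _ _ (Finset.mem_univ α)
    rw [this] at hcon
    linarith [hx.2]

/-- The orbit equivalence relation of a self-map. -/
def orbitSetoid {X : Type*} (f : X → X) : Setoid X where
  r x y := ∃ m n : ℕ, f^[m] x = f^[n] y
  iseqv := by
    refine ⟨fun x => ⟨0, 0, rfl⟩, ?_, ?_⟩
    · rintro x y ⟨m, n, h⟩; exact ⟨n, m, h.symm⟩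
    · rintro x y z ⟨a, b, hab⟩ ⟨c, e, hce⟩
      refine ⟨c + a, b + e, ?_⟩
      rw [Function.iterate_add_apply, hab, ← Function.iterate_add_apply, add_comm c b,
        Function.iterate_add_apply, hce, ← Function.iterate_add_apply]

end IEM

open IEM in
/-- Denjoy-like Gottschalk–Hedlund theorem for a minimal
interval exchange map `T` of `[0,1)`: if `Φ` is continuous on each `I_α`
with one-sided limits at the endpoints (i.e. extends continuously to the
closure of each `I_α`) and its Birkhoff sums at some point `x₀` are
bounded, then `Φ` is the `T`-coboundary of a bounded function `Ψ`. -/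
theorem gottschalk_hedlund_iem
    {A : Type} [Fintype A] [DecidableEq A] {d : ℕ}
    (hd : 2 ≤ d) (hcard : Fintype.card A = d)
    (D : IEMData A d) (hD : GoodData D) (hone : totalLen D = 1)
    (T : ℝ → ℝ) (hT : IsIEMOf T D)
    (hmin : ∀ x ∈ Set.Ico (0 : ℝ) 1, ∀ y ∈ Set.Ico (0 : ℝ) 1,
      ∀ δ : ℝ, 0 < δ → ∃ n : ℕ, |T^[n] x - y| < δ)
    (Φ : ℝ → ℝ)
    (hΦ : ∀ α : A, ∃ g : ℝ → ℝ, ContinuousOn g (closure (Iset D α)) ∧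
      Set.EqOn Φ g (Iset D α))
    (x₀ : ℝ) (hx₀ : x₀ ∈ Set.Ico (0 : ℝ) 1)
    (hbdd : ∃ C : ℝ, ∀ N : ℕ, |∑ i ∈ Finset.range N, Φ (T^[i] x₀)| ≤ C) :
    ∃ Ψ : ℝ → ℝ, (∃ C : ℝ, ∀ x ∈ Set.Ico (0 : ℝ) 1, |Ψ x| ≤ C) ∧
      ∀ x ∈ Set.Ico (0 : ℝ) 1, Ψ x - Ψ (T x) = Φ x := by
  obtain ⟨hbij0, hbij1, hlen, _⟩ := hD
  obtain ⟨C, hC⟩ := hbdd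
  -- Birkhoff sums
  obtain ⟨S, hSdef⟩ : ∃ S : ℕ → ℝ → ℝ, ∀ n x, S n x = ∑ i ∈ Finset.range n, Φ (T^[i] x) :=
    ⟨_, fun _ _ => rfl⟩
  have hScocy : ∀ a b x, S (a + b) x = S a x + S b (T^[a] x) := by
    intro a b x
    rw [hSdef, hSdef, hSdef, Finset.sum_range_add]
    congr 1
    apply Finset.sum_congr rfl
    intro i _
    rw [add_comm a i, Function.iterate_add_apply]
  have hSsucc : ∀ k z, S (k + 1) z = S k z + Φ (T^[k] z) := by
    intro k z; rw [hSdef, hSdef, Finset.sum_range_succ]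
  -- T maps [0,1) into itself
  have hTmaps : ∀ x ∈ Set.Ico (0:ℝ) 1, T x ∈ Set.Ico (0:ℝ) 1 := by
    intro x hx
    obtain ⟨α, hα⟩ := covers hbij0 hlen hone hx
    rw [hT α x hα]
    obtain ⟨h1, h2⟩ := hα
    constructor
    · have := leftPt1_nonneg hlen α; linarith
    · have := leftPt1_add_le hlen hone α; linarith
  have hiter : ∀ x ∈ Set.Ico (0:ℝ) 1, ∀ n : ℕ, T^[n] x ∈ Set.Ico (0:ℝ) 1 := by
    intro x hx n
    induction n with
    | zero => simpa using hx
    | succ n ih => rw [Function.iterate_succ_apply']; exact hTmaps _ ih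
  -- right-hand interval structure
  have hrightδ : ∀ x ∈ Set.Ico (0:ℝ) 1, ∃ α, ∃ δ : ℝ, 0 < δ ∧
      Set.Ico x (x + δ) ⊆ Iset D α := by
    intro x hx
    obtain ⟨α, h1, h2⟩ := covers hbij0 hlen hone hx
    refine ⟨α, leftPt0 D α + D.len α - x, by linarith, ?_⟩
    intro y hy
    exact ⟨le_trans h1 hy.1, by have := hy.2; linarith⟩
  -- right-continuity of Φ
  have hPhiRC : ∀ p ∈ Set.Ico (0:ℝ) 1, ∀ ε : ℝ, 0 < ε → ∃ δ : ℝ, 0 < δ ∧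
      ∀ z ∈ Set.Ico p (p + δ), |Φ z - Φ p| ≤ ε := by
    intro p hp ε hε
    obtain ⟨α, δ₀, hδ₀, hsub⟩ := hrightδ p hp
    obtain ⟨g, hg, heq⟩ := hΦ α
    have hpI : p ∈ Iset D α := hsub ⟨le_refl p, by linarith⟩
    have hcw : ContinuousWithinAt g (closure (Iset D α)) p := hg p (subset_closure hpI)
    obtain ⟨δ₁, hδ₁, h1⟩ := Metric.continuousWithinAt_iff.1 hcw ε hε
    refine ⟨min δ₀ δ₁, by positivity, ?_⟩
    intro z hz
    have hz2 := hz.2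
    have hmin01 := min_le_left δ₀ δ₁
    have hmin02 := min_le_right δ₀ δ₁
    have hzI : z ∈ Iset D α := hsub ⟨hz.1, by linarith⟩
    have hdist : dist z p < δ₁ := by
      rw [Real.dist_eq, abs_of_nonneg (by linarith [hz.1])]
      linarith
    have h2 := h1 (subset_closure hzI) hdist
    rw [Real.dist_eq] at h2
    rw [heq hzI, heq hpI]
    exact h2.le
  -- local translation structure of iterates
  have htrans : ∀ x ∈ Set.Ico (0:ℝ) 1, ∀ n : ℕ, ∃ δ : ℝ, 0 < δ ∧
      ∀ y ∈ Set.Ico x (x + δ), ∀ i ≤ n, T^[i] y = T^[i] x + (y - x) := by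
    intro x hx n
    induction n with
    | zero =>
      refine ⟨1, one_pos, ?_⟩
      intro y _ i hi
      interval_cases i
      simp
    | succ n ih =>
      obtain ⟨δ, hδ, hδ'⟩ := ih
      obtain ⟨α, ε, hε, hsub⟩ := hrightδ (T^[n] x) (hiter x hx n)
      refine ⟨min δ ε, by positivity, ?_⟩
      intro y hy i hi
      have hyδ : y ∈ Set.Ico x (x + δ) :=
        ⟨hy.1, lt_of_lt_of_le hy.2 (by have := min_le_left δ ε; linarith)⟩
      rcases Nat.lt_succ_iff_lt_or_eq.1 (Nat.lt_succ_of_le hi) with h | h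
      · exact hδ' y hyδ i (Nat.lt_succ_iff.1 h)
      · subst h
        have hn : T^[n] y = T^[n] x + (y - x) := hδ' y hyδ n (le_refl n)
        have hymem : T^[n] y ∈ Iset D α := by
          apply hsub
          constructor
          · rw [hn]; have := hy.1; linarith
          · rw [hn]
            have h2 := hy.2
            have := min_le_right δ ε
            linarith
        have hxmem : T^[n] x ∈ Iset D α := hsub ⟨le_refl _, by linarith⟩
        rw [Function.iterate_succ_apply', Function.iterate_succ_apply',
          hT α _ hymem, hT α _ hxmem, hn]
        ring
  -- right-continuity of Birkhoff sums
  have hSnRC : ∀ x ∈ Set.Ico (0:ℝ) 1, ∀ n : ℕ, ∀ ε : ℝ, 0 < ε → ∃ δ : ℝ, 0 < δ ∧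
      ∀ y ∈ Set.Ico x (x + δ), |S n y - S n x| ≤ ε := by
    intro x hx n
    induction n with
    | zero =>
      intro ε hε
      refine ⟨1, one_pos, ?_⟩
      intro y _
      rw [hSdef, hSdef]
      simpa using hε.le
    | succ n ih =>
      intro ε hε
      obtain ⟨δ₁, hδ₁, h1⟩ := ih (ε/2) (by linarith)
      obtain ⟨δ₂, hδ₂, h2⟩ := htrans x hx n
      obtain ⟨δ₃, hδ₃, h3⟩ := hPhiRC (T^[n] x) (hiter x hx n) (ε/2) (by linarith)
      refine ⟨min δ₁ (min δ₂ δ₃), by positivity, ?_⟩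
      intro y hy
      have hm1 := min_le_left δ₁ (min δ₂ δ₃)
      have hm2 := le_trans (min_le_right δ₁ (min δ₂ δ₃)) (min_le_left δ₂ δ₃)
      have hm3 := le_trans (min_le_right δ₁ (min δ₂ δ₃)) (min_le_right δ₂ δ₃)
      have hy2 := hy.2
      have ha := h1 y ⟨hy.1, by linarith⟩
      have hb := h2 y ⟨hy.1, by linarith⟩ n (le_refl n)
      have hc : T^[n] y ∈ Set.Ico (T^[n] x) (T^[n] x + δ₃) := by
        rw [hb]
        constructor
        · have := hy.1; linarith
        · linarith
      have hd2 := h3 _ hc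
      rw [hSsucc, hSsucc]
      have : S n y + Φ (T^[n] y) - (S n x + Φ (T^[n] x))
          = (S n y - S n x) + (Φ (T^[n] y) - Φ (T^[n] x)) := by ring
      rw [this]
      calc |(S n y - S n x) + (Φ (T^[n] y) - Φ (T^[n] x))|
          ≤ |S n y - S n x| + |Φ (T^[n] y) - Φ (T^[n] x)| := abs_add_le _ _
        _ ≤ ε/2 + ε/2 := add_le_add ha hd2
        _ = ε := by ring
  -- orbit of x₀ approximates every point from the right
  have horb : ∀ x ∈ Set.Ico (0:ℝ) 1, ∀ δ : ℝ, 0 < δ →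
      ∃ m : ℕ, T^[m] x₀ ∈ Set.Ico x (x + δ) := by
    intro x hx δ hδ
    set η := min δ (1 - x) with hη
    have hη0 : 0 < η := by
      apply lt_min hδ; linarith [hx.2]
    have hymem : x + η / 2 ∈ Set.Ico (0:ℝ) 1 := by
      constructor
      · linarith [hx.1]
      · have := min_le_right δ (1 - x); linarith
    obtain ⟨m, hm⟩ := hmin x₀ hx₀ (x + η / 2) hymem (η / 2) (by linarith)
    rw [abs_lt] at hm
    refine ⟨m, by linarith [hm.1], ?_⟩
    have := min_le_left δ (1 - x)
    linarith [hm.2]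
  -- uniform bound on Birkhoff sums
  have hSb : ∀ m k : ℕ, |S k (T^[m] x₀)| ≤ 2 * C := by
    intro m k
    have h1 := hScocy m k x₀
    have h2 : |S (m + k) x₀| ≤ C := by rw [hSdef]; exact hC (m + k)
    have h3 : |S m x₀| ≤ C := by rw [hSdef]; exact hC m
    have : S k (T^[m] x₀) = S (m + k) x₀ - S m x₀ := by linarith
    rw [this]
    calc |S (m + k) x₀ - S m x₀| ≤ |S (m + k) x₀| + |S m x₀| := abs_sub _ _
      _ ≤ 2 * C := by linarith
  have huni : ∀ x ∈ Set.Ico (0:ℝ) 1, ∀ n : ℕ, |S n x| ≤ 2 * C := by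
    intro x hx n
    refine le_of_forall_pos_le_add ?_
    intro ε hε
    obtain ⟨δ, hδ, hδ'⟩ := hSnRC x hx n ε hε
    obtain ⟨m, hm⟩ := horb x hx δ hδ
    have h1 := hδ' _ hm
    have h2 := hSb m n
    calc |S n x| = |S n (T^[m] x₀) - (S n (T^[m] x₀) - S n x)| := by ring_nf
      _ ≤ |S n (T^[m] x₀)| + |S n (T^[m] x₀) - S n x| := abs_sub _ _
      _ ≤ 2 * C + ε := add_le_add h2 h1
  -- the restricted map on [0,1)
  obtain ⟨T', hT'⟩ : ∃ T' : (Set.Ico (0:ℝ) 1) → (Set.Ico (0:ℝ) 1),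
      ∀ x, (T' x : ℝ) = T x :=
    ⟨fun x => ⟨T x.1, hTmaps x.1 x.2⟩, fun _ => rfl⟩
  have hcoe : ∀ (m : ℕ) (x : Set.Ico (0:ℝ) 1), ((T'^[m] x : Set.Ico (0:ℝ) 1) : ℝ) = T^[m] (x : ℝ) := by
    intro m
    induction m with
    | zero => intro x; simp
    | succ m ih =>
      intro x
      rw [Function.iterate_succ_apply', Function.iterate_succ_apply', hT', ih]
  -- no periodic points
  have hkey : ∀ (x : Set.Ico (0:ℝ) 1) (a b : ℕ), a < b → T'^[a] x = T'^[b] x → False := by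
    intro x a b hab h
    have hforall : ∀ n : ℕ, ∃ i, i < b ∧ T'^[n] x = T'^[i] x := by
      intro n
      induction n using Nat.strong_induction_on with
      | _ n ih =>
        by_cases hn : n < b
        · exact ⟨n, hn, rfl⟩
        · push_neg at hn
          have hstep : T'^[n] x = T'^[n - b + a] x := by
            calc T'^[n] x = T'^[(n - b) + b] x := by rw [Nat.sub_add_cancel hn]
              _ = T'^[n - b] (T'^[b] x) := Function.iterate_add_apply _ _ _ _
              _ = T'^[n - b] (T'^[a] x) := by rw [← h]
              _ = T'^[n - b + a] x := (Function.iterate_add_apply _ _ _ _).symm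
          obtain ⟨i, hi, hh⟩ := ih (n - b + a) (by omega)
          exact ⟨i, hi, hstep.trans hh⟩
    set F : Finset ℝ := (Finset.range b).image (fun i => ((T'^[i] x : Set.Ico (0:ℝ) 1) : ℝ)) with hF
    obtain ⟨y, hy⟩ := ((Set.Ico_infinite (show (0:ℝ) < 1 by norm_num)).diff
      F.finite_toSet).nonempty
    have hymem : y ∈ Set.Ico (0:ℝ) 1 := hy.1
    have hyF : y ∉ F := by simpa using hy.2
    have hFne : (F.image (fun f => |f - y|)).Nonempty := by
      apply Finset.Nonempty.image
      apply Finset.Nonempty.image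
      exact ⟨0, Finset.mem_range.2 (by omega)⟩
    set δ := (F.image (fun f => |f - y|)).min' hFne with hδdef
    have hδpos : 0 < δ := by
      obtain ⟨v, hv, hveq⟩ := Finset.mem_image.1 (Finset.min'_mem _ hFne)
      rw [hδdef, ← hveq]
      apply abs_pos.2
      intro h0
      exact hyF (by rwa [sub_eq_zero.1 h0] at hv)
    obtain ⟨n, hn⟩ := hmin (x : ℝ) x.2 y hymem δ hδpos
    have hmemF : T^[n] (x : ℝ) ∈ F := by
      obtain ⟨i, hi, he⟩ := hforall n
      apply Finset.mem_image.2
      exact ⟨i, Finset.mem_range.2 hi, by rw [← hcoe n x, he]⟩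
    have : δ ≤ |T^[n] (x : ℝ) - y| :=
      Finset.min'_le _ _ (Finset.mem_image_of_mem _ hmemF)
    linarith
  have hnorep : ∀ (x : Set.Ico (0:ℝ) 1) (a b : ℕ), T'^[a] x = T'^[b] x → a = b := by
    intro x a b h
    rcases lt_trichotomy a b with h1 | h1 | h1
    · exact absurd (hkey x a b h1 h) (fun q => q)
    · exact h1
    · exact absurd (hkey x b a h1 h.symm) (fun q => q)
  -- orbit representatives
  obtain ⟨rep, hrep1, hrep2⟩ : ∃ rep : (Set.Ico (0:ℝ) 1) → (Set.Ico (0:ℝ) 1),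
      (∀ x, ∃ m n : ℕ, T'^[m] x = T'^[n] (rep x)) ∧ ∀ x, rep (T' x) = rep x := by
    refine ⟨fun x => (Quotient.mk (orbitSetoid T') x).out, ?_, ?_⟩
    · intro x
      obtain ⟨m, n, h⟩ := Quotient.mk_out (s := orbitSetoid T') x
      exact ⟨n, m, h.symm⟩
    · intro x
      apply congrArg Quotient.out
      apply Quotient.sound
      exact ⟨0, 1, by simp⟩
  obtain ⟨W, hW⟩ : ∃ W : (Set.Ico (0:ℝ) 1) → ℕ × ℕ,
      ∀ x, T'^[(W x).1] x = T'^[(W x).2] (rep x) := by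
    choose m n h using hrep1
    exact ⟨fun x => (m x, n x), h⟩
  -- well-definedness of the transfer function
  have hmono : ∀ (x : Set.Ico (0:ℝ) 1) (m n m' n' : ℕ),
      T'^[m] x = T'^[n] (rep x) → T'^[m'] x = T'^[n'] (rep x) → m ≤ m' →
      S m' ↑x - S n' ↑(rep x) = S m ↑x - S n ↑(rep x) := by
    intro x m n m' n' h h' hmm
    have e1 : T'^[(m' - m) + n] (rep x) = T'^[n'] (rep x) := by
      calc T'^[(m' - m) + n] (rep x) = T'^[m' - m] (T'^[n] (rep x)) :=
            Function.iterate_add_apply _ _ _ _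
        _ = T'^[m' - m] (T'^[m] x) := by rw [← h]
        _ = T'^[(m' - m) + m] x := (Function.iterate_add_apply _ _ _ _).symm
        _ = T'^[m'] x := by rw [Nat.sub_add_cancel hmm]
        _ = T'^[n'] (rep x) := h'
    have e2 : (m' - m) + n = n' := hnorep _ _ _ e1
    have e3 := hScocy m (m' - m) ↑x
    rw [show m + (m' - m) = m' by omega] at e3
    have e4 : T^[m] (↑x : ℝ) = T^[n] ↑(rep x) := by rw [← hcoe, ← hcoe, h]
    have e5 := hScocy n (m' - m) ↑(rep x)
    rw [show n + (m' - m) = n' by omega] at e5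
    rw [e4] at e3
    linarith
  have hwd : ∀ (x : Set.Ico (0:ℝ) 1) (m n : ℕ), T'^[m] x = T'^[n] (rep x) →
      S m ↑x - S n ↑(rep x) = S (W x).1 ↑x - S (W x).2 ↑(rep x) := by
    intro x m n h
    rcases le_total m (W x).1 with hle | hle
    · exact (hmono x m n (W x).1 (W x).2 h (hW x) hle).symm
    · exact hmono x (W x).1 (W x).2 m n (hW x) h hle
  -- the transfer function
  refine ⟨fun x => if h : x ∈ Set.Ico (0:ℝ) 1 then
      S (W ⟨x, h⟩).1 x - S (W ⟨x, h⟩).2 ↑(rep ⟨x, h⟩) else 0, ⟨4 * C, ?_⟩, ?_⟩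
  · -- boundedness
    intro x hx
    beta_reduce
    rw [dif_pos hx]
    have h1 := huni x hx (W ⟨x, hx⟩).1
    have h2 := huni ↑(rep ⟨x, hx⟩) (rep ⟨x, hx⟩).2 (W ⟨x, hx⟩).2
    calc |S (W ⟨x, hx⟩).1 x - S (W ⟨x, hx⟩).2 ↑(rep ⟨x, hx⟩)|
        ≤ |S (W ⟨x, hx⟩).1 x| + |S (W ⟨x, hx⟩).2 ↑(rep ⟨x, hx⟩)| := abs_sub _ _
      _ ≤ 4 * C := by linarith
  · -- coboundary identity
    intro x hx
    have hTx := hTmaps x hx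
    beta_reduce
    rw [dif_pos hx, dif_pos hTx]
    have hsub : (⟨T x, hTx⟩ : Set.Ico (0:ℝ) 1) = T' ⟨x, hx⟩ :=
      Subtype.ext (hT' ⟨x, hx⟩).symm
    rw [hsub]
    set x' : (Set.Ico (0:ℝ) 1) := ⟨x, hx⟩ with hx'
    set m := (W x').1
    set n := (W x').2
    have hw : T'^[m] x' = T'^[n] (rep x') := hW x'
    have hwit : T'^[m] (T' x') = T'^[n + 1] (rep (T' x')) := by
      rw [hrep2 x']
      calc T'^[m] (T' x') = T'^[m + 1] x' := (Function.iterate_succ_apply _ _ _).symm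
        _ = T' (T'^[m] x') := Function.iterate_succ_apply' _ _ _
        _ = T' (T'^[n] (rep x')) := by rw [hw]
        _ = T'^[n + 1] (rep x') := (Function.iterate_succ_apply' _ _ _).symm
    have hval := (hwd (T' x') m (n + 1) hwit).symm
    have hxx : ((x' : ℝ)) = x := rfl
    rw [hT'] at hval
    rw [hxx] at hval
    rw [hval, hrep2 x']
    -- now pure computation
    have e1 : S (m + 1) x = S m x + Φ (T^[m] x) := hSsucc m x
    have e2 := hScocy 1 m x
    have e3 : S 1 x = Φ x := by rw [hSdef]; simp
    rw [show (1 : ℕ) + m = m + 1 by ring] at e2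
    have e4 : T^[1] x = T x := by simp
    rw [e3, e4] at e2
    have e5 : S (n + 1) (↑(rep x') : ℝ) = S n ↑(rep x') + Φ (T^[n] ↑(rep x')) :=
      hSsucc n ↑(rep x')
    have e6 : T^[m] x = T^[n] ↑(rep x') := by
      rw [← hxx, ← hcoe, ← hcoe, hw]
    rw [e6] at e1
    linarith
end

section
/- If the lengths (λ_α)_{α∈A} of an interval exchange map T with admissible combinatorial data are rationally independent, then T satisfies Keane's condition: no orbit segment starts and ends with a discontinuity. -/
open MeasureTheory Finset

/-!
Suppose `T^n a_α = a_β` for left endpoints `a_α, a_β` with `a_β ≠ 0`, and let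
`α = γ₀, γ₁, …, γₙ = β` be the itinerary of this orbit segment. On `I_γ` the map `T` translates
by `a'_γ - a_γ`, where `a_γ`, `a'_γ` are sums of the lengths lying before `γ` in the orders
`π₀`, `π₁`; telescoping gives `∑_{j<n} a'_{γ_j} = ∑_{j<n} a_{γ_{j+1}}`. By rational independence
both sides have the same coefficient on every `λ_δ`: for each position `t`, the number of `j`
with `t < π₁ γ_j` equals the number of `j` with `t < π₀ γ_{j+1}`. Both counts are antitone in
`t`, so each superlevel set of the common count is simultaneously `{π₁ < k}` and `{π₀ < k}`;
admissibility forces `k ∈ {0, d}`, and `k = d` is excluded because the first count vanishes at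
the last position. Hence all counts vanish, contradicting `π₀ β > 0`.
-/

open Function

namespace IEM

variable {A : Type} {d : ℕ}

def countAbove {ι : Type*} (p : A → Fin d) (s : Finset ι) (w : ι → A) (t : Fin d) : ℕ :=
  #(s.filter fun i => t < p (w i))

theorem countAbove_antitone {ι : Type*} {p : A → Fin d} (s : Finset ι) (w : ι → A) :
    Antitone (countAbove p s w) := fun _ _ hts =>
  card_le_card <| monotone_filter_right s fun _ _ => hts.trans_lt

variable [Fintype A]

section LowerSum

variable (p : A → Fin d) (len : A → ℝ)

def lowerSum (α : A) : ℝ :=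
  ∑ β ∈ univ.filter (fun β => p β < p α), len β

variable {p len}

theorem lowerSum_nonneg (hlen : ∀ β, 0 ≤ len β) (α : A) : 0 ≤ lowerSum p len α :=
  sum_nonneg fun β _ => hlen β

theorem lowerSum_add_le_sum (hlen : ∀ β, 0 ≤ len β) (α : A) :
    lowerSum p len α + len α ≤ ∑ β, len β := by
  classical
  rw [lowerSum, add_comm, ← sum_insert (by simp)]
  exact sum_le_sum_of_subset_of_nonneg (subset_univ _) fun β _ _ => hlen β

theorem lowerSum_add_le_of_lt (hlen : ∀ β, 0 ≤ len β) {α β : A} (h : p α < p β) :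
    lowerSum p len α + len α ≤ lowerSum p len β := by
  classical
  rw [lowerSum, add_comm, ← sum_insert (by simp)]
  refine sum_le_sum_of_subset_of_nonneg ?_ fun γ _ _ => hlen γ
  intro γ hγ
  simp only [mem_insert, mem_filter, mem_univ, true_and] at hγ ⊢
  rcases hγ with rfl | hγ
  exacts [h, hγ.trans h]

theorem lowerSum_eq_zero {α : A} (h : (p α : ℕ) = 0) : lowerSum p len α = 0 :=
  sum_eq_zero fun β hβ => by simp [Fin.lt_def, h] at hβ

theorem lowerSum_eq_add_of_val_eq_succ (hp : Injective p) {α β : A}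
    (h : (p β : ℕ) = p α + 1) : lowerSum p len β = lowerSum p len α + len α := by
  classical
  have : univ.filter (fun γ => p γ < p β) = insert α (univ.filter fun γ => p γ < p α) := by
    ext γ
    simp only [mem_filter, mem_univ, true_and, mem_insert]
    rw [← hp.eq_iff, Fin.ext_iff, Fin.lt_def, Fin.lt_def, h]
    omega
  rw [lowerSum, this, sum_insert (by simp), add_comm, lowerSum]

theorem lowerSum_add_eq_sum (hp : Injective p) {α : A} (h : (p α : ℕ) + 1 = d) :
    lowerSum p len α + len α = ∑ β, len β := by
  classical
  have : insert α (univ.filter fun γ => p γ < p α) = univ := by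
    refine eq_univ_of_forall fun γ => ?_
    simp only [mem_insert, mem_filter, mem_univ, true_and]
    rw [← hp.eq_iff, Fin.ext_iff, Fin.lt_def]
    have := (p γ).isLt
    omega
  rw [lowerSum, add_comm, ← sum_insert (by simp), this]

theorem sum_lowerSum_eq {ι : Type*} (s : Finset ι) (w : ι → A) :
    ∑ i ∈ s, lowerSum p len (w i) = ∑ β, countAbove p s w (p β) • len β := by
  simp only [lowerSum, countAbove, sum_filter]
  rw [sum_comm]
  refine sum_congr rfl fun β _ => ?_
  rw [← sum_filter, sum_const]

end LowerSum

theorem lt_card_filter_iff_of_antitone {P : Fin d → Prop} [DecidablePred P] (hP : Antitone P)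
    (t : Fin d) : (t : ℕ) < #(univ.filter P) ↔ P t := by
  have hlower : IsLowerSet {t | P t} := fun _ _ hts ht => hP hts ht
  rcases hlower.eq_univ_or_Iio with h | ⟨a, h⟩
  · have hP' : ∀ t, P t := fun t => Set.ext_iff.1 h t |>.2 trivial
    simp [hP']
  · have hP' : ∀ t, P t ↔ t < a := fun t => Set.ext_iff.1 h t
    have : univ.filter P = Iio a := by ext; simp [hP']
    rw [this, Fin.card_Iio, hP', Fin.lt_def]

theorem card_filter_comp_of_bijective {q : A → Fin d} (hq : Bijective q) (P : Fin d → Prop)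
    [DecidablePred P] : #(univ.filter fun α => P (q α)) = #(univ.filter P) :=
  card_nbij q (fun α hα => by simpa using hα) hq.1.injOn fun t ht =>
    let ⟨α, hα⟩ := hq.2 t; ⟨α, by simpa [hα] using ht, hα⟩

theorem Admissible.eq_zero_of_antitone_comp_eq {p0 p1 : A → Fin d} (hadm : Admissible p0 p1)
    (h0 : Bijective p0) (h1 : Bijective p1) {f g : Fin d → ℕ} (hf : Antitone f) (hg : Antitone g)
    (hf0 : ∃ t, f t = 0) (hfg : f ∘ p1 = g ∘ p0) : g = 0 := by
  funext t
  obtain ⟨ε, rfl⟩ := h0.2 t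
  by_contra hne
  set S := univ.filter fun α => g (p0 ε) ≤ g (p0 α) with hS
  have hS_eq : S = univ.filter fun α => g (p0 ε) ≤ f (p1 α) := by
    simp only [hS, show ∀ α, f (p1 α) = g (p0 α) from congrFun hfg]
  have hS0 : ∀ α, α ∈ S ↔ (p0 α : ℕ) < #S := fun α => by
    rw [hS, card_filter_comp_of_bijective h0 (fun t => g (p0 ε) ≤ g t),
      lt_card_filter_iff_of_antitone fun _ _ hab h => h.trans (hg hab)]
    simp
  have hS1 : ∀ α, α ∈ S ↔ (p1 α : ℕ) < #S := fun α => by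
    rw [hS_eq, card_filter_comp_of_bijective h1 (fun t => g (p0 ε) ≤ f t),
      lt_card_filter_iff_of_antitone fun _ _ hab h => h.trans (hf hab)]
    simp
  have hS_pos : 0 < #S := card_pos.2 ⟨ε, by simp [hS]⟩
  have hS_lt : #S < d := by
    obtain ⟨t₀, ht₀⟩ := hf0
    obtain ⟨ε₀, rfl⟩ := h1.2 t₀
    have hε₀ : ε₀ ∉ S := by
      rw [hS_eq]
      simp only [mem_filter, mem_univ, true_and, ht₀, Nat.le_zero]
      exact hne
    calc #S < #(univ : Finset A) :=
          card_lt_card (ssubset_univ_iff.2 fun h => hε₀ (h ▸ mem_univ _))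
      _ = d := by rw [card_univ, Fintype.card_of_bijective h0, Fintype.card_fin]
  exact hadm #S hS_pos hS_lt (Set.ext fun α => (hS0 α).symm.trans (hS1 α))

theorem leftPt0_eq_lowerSum (D : IEMData A d) : leftPt0 D = lowerSum D.p0 D.len := rfl

theorem leftPt1_eq_lowerSum (D : IEMData A d) : leftPt1 D = lowerSum D.p1 D.len := rfl

variable {D : IEMData A d}

theorem val_p0_eq_zero_of_sum_leftPt1_eq (h0 : Bijective D.p0) (h1 : Bijective D.p1)
    (hadm : Admissible D.p0 D.p1) (hind : LinearIndependent ℤ D.len) {ι : Type*}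
    (s : Finset ι) (u v : ι → A)
    (h : ∑ i ∈ s, leftPt1 D (u i) = ∑ i ∈ s, leftPt0 D (v i)) :
    ∀ i ∈ s, (D.p0 (v i) : ℕ) = 0 := by
  intro i hi
  have hd : 0 < d := (D.p0 (v i)).pos
  have hcount : ∀ β, countAbove D.p1 s u (D.p1 β) = countAbove D.p0 s v (D.p0 β) := by
    rw [leftPt1_eq_lowerSum, leftPt0_eq_lowerSum, sum_lowerSum_eq, sum_lowerSum_eq] at h
    simp only [← natCast_zsmul] at h
    exact fun β => Int.ofNat_inj.1 (Fintype.linearIndependent_iffₛ.1 hind _ _ h β)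
  have hf0 : countAbove D.p1 s u ⟨d - 1, by omega⟩ = 0 :=
    card_eq_zero.2 <| filter_false_of_mem fun j _ => by
      have := (D.p1 (u j)).isLt
      rw [Fin.lt_def, Fin.val_mk]
      omega
  have hg := hadm.eq_zero_of_antitone_comp_eq h0 h1 (countAbove_antitone s u)
    (countAbove_antitone s v) ⟨_, hf0⟩ (funext hcount)
  have hi' := congrFun hg ⟨0, hd⟩
  simp only [countAbove, Pi.zero_apply, card_eq_zero, filter_eq_empty_iff] at hi'
  have := hi' hi
  rw [Fin.lt_def, Fin.val_mk] at this
  omega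

theorem leftPt0_mem_Iset (hpos : ∀ α, 0 < D.len α) (α : A) : leftPt0 D α ∈ Iset D α :=
  Set.left_mem_Ico.2 (lt_add_of_pos_right _ (hpos α))

theorem Iset_subset_Ico (hlen : ∀ α, 0 ≤ D.len α) (α : A) :
    Iset D α ⊆ Set.Ico 0 (totalLen D) := fun _ ⟨hl, hr⟩ =>
  ⟨(lowerSum_nonneg hlen α).trans hl, hr.trans_le (lowerSum_add_le_sum hlen α)⟩

theorem eq_of_mem_Iset (h0 : Injective D.p0) (hlen : ∀ α, 0 ≤ D.len α) {x : ℝ} {α β : A}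
    (hα : x ∈ Iset D α) (hβ : x ∈ Iset D β) : α = β := by
  have disjoint : ∀ {α β}, D.p0 α < D.p0 β → x ∈ Iset D α → x ∉ Iset D β :=
    fun hlt hα hβ => (hα.2.trans_le (lowerSum_add_le_of_lt hlen hlt)).not_ge hβ.1
  rcases lt_trichotomy (D.p0 α) (D.p0 β) with h | h | h
  exacts [absurd hβ (disjoint h hα), h0 h, absurd hα (disjoint h hβ)]

theorem exists_mem_Iset (h0 : Bijective D.p0) {x : ℝ} (hx : x ∈ Set.Ico 0 (totalLen D)) :
    ∃ α, x ∈ Iset D α := by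
  by_contra! hnot
  have hright : ∀ α, leftPt0 D α ≤ x → leftPt0 D α + D.len α ≤ x :=
    fun α hle => not_lt.1 fun hlt => hnot α ⟨hle, hlt⟩
  have hle : ∀ k (α : A), (D.p0 α : ℕ) = k → leftPt0 D α + D.len α ≤ x := by
    intro k
    induction k with
    | zero =>
      intro α hα
      refine hright α ?_
      rw [leftPt0_eq_lowerSum, lowerSum_eq_zero hα]
      exact hx.1
    | succ k ih =>
      intro α hα
      obtain ⟨β, hβ⟩ := h0.2 ⟨k, by have := (D.p0 α).isLt; omega⟩
      refine hright α ?_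
      rw [leftPt0_eq_lowerSum, lowerSum_eq_add_of_val_eq_succ h0.1 (α := β) (by rw [hα, hβ])]
      exact ih β (by rw [hβ])
  obtain ⟨α₀⟩ : Nonempty A := by
    by_contra hA
    rw [not_nonempty_iff] at hA
    have : totalLen D = 0 := sum_of_isEmpty _
    linarith [hx.1, hx.2]
  have hd : 0 < d := (D.p0 α₀).pos
  obtain ⟨α, hα⟩ := h0.2 ⟨d - 1, by omega⟩
  have hlast : leftPt0 D α + D.len α = totalLen D :=
    lowerSum_add_eq_sum h0.1 (by rw [hα, Fin.val_mk]; omega)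
  linarith [hle _ α rfl, hx.2]

theorem mapsTo_Ico_totalLen {T : ℝ → ℝ} (h0 : Bijective D.p0) (hlen : ∀ α, 0 ≤ D.len α)
    (hT : IsIEMOf T D) : Set.MapsTo T (Set.Ico 0 (totalLen D)) (Set.Ico 0 (totalLen D)) := by
  intro x hx
  obtain ⟨α, hα⟩ := exists_mem_Iset h0 hx
  rw [hT α x hα]
  obtain ⟨hl, hr⟩ : leftPt0 D α ≤ x ∧ x < leftPt0 D α + D.len α := hα
  have h1 : 0 ≤ leftPt1 D α := lowerSum_nonneg hlen α
  have h2 : leftPt1 D α + D.len α ≤ totalLen D := lowerSum_add_le_sum hlen α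
  constructor <;> linarith

theorem sum_leftPt1_eq_sum_leftPt0_succ {T : ℝ → ℝ} (hT : IsIEMOf T D) {x : ℝ} {g : ℕ → A}
    (hg : ∀ j, T^[j] x ∈ Iset D (g j)) (hx : x = leftPt0 D (g 0)) {n : ℕ}
    (hn : T^[n] x = leftPt0 D (g n)) :
    ∑ j ∈ range n, leftPt1 D (g j) = ∑ j ∈ range n, leftPt0 D (g (j + 1)) := by
  have hstep : ∀ j, T^[j + 1] x - T^[j] x = leftPt1 D (g j) - leftPt0 D (g j) := fun j => by
    rw [iterate_succ_apply', hT _ _ (hg j)]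
    ring
  have horbit := sum_range_sub (fun j => T^[j] x) n
  have hleft := sum_range_sub (fun j => leftPt0 D (g j)) n
  simp only [hstep, sum_sub_distrib, iterate_zero_apply] at horbit hleft
  linarith

end IEM

open IEM in
theorem rationally_independent_implies_keane_general
    {A : Type} [Fintype A] {d : ℕ}
    (D : IEMData A d) (hD : GoodData D)
    (T : ℝ → ℝ) (hT : IsIEMOf T D)
    (hind : ∀ n : A → ℤ, (∑ α, (n α : ℝ) * D.len α) = 0 → ∀ α, n α = 0) :
    KeaneCond T D := by
  obtain ⟨h0, h1, hpos, hadm⟩ := hD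
  have hlen : ∀ α, 0 ≤ D.len α := fun α => (hpos α).le
  have hindep : LinearIndependent ℤ D.len := Fintype.linearIndependent_iff.2 fun c hc =>
    hind c (by simpa only [zsmul_eq_mul] using hc)
  intro n hn α β _ hβ hTn
  have horbit : ∀ j, T^[j] (leftPt0 D α) ∈ Set.Ico 0 (totalLen D) := fun j =>
    (mapsTo_Ico_totalLen h0 hlen hT).iterate j (Iset_subset_Ico hlen α (leftPt0_mem_Iset hpos α))
  choose g hg using fun j => exists_mem_Iset h0 (horbit j)
  have hg0 : g 0 = α := eq_of_mem_Iset h0.1 hlen (hg 0) (leftPt0_mem_Iset hpos α)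
  have hgn : g n = β := eq_of_mem_Iset h0.1 hlen (hg n) (hTn ▸ leftPt0_mem_Iset hpos β)
  have hrel := sum_leftPt1_eq_sum_leftPt0_succ hT hg (by rw [hg0]) (by rw [hTn, hgn])
  have hβ0 := val_p0_eq_zero_of_sum_leftPt1_eq h0 h1 hadm hindep _ g (fun j => g (j + 1)) hrel
    (n - 1) (mem_range.2 (by omega))
  rw [Nat.sub_add_cancel hn, hgn] at hβ0
  exact hβ (lowerSum_eq_zero hβ0)

open IEM in
/-- if the lengths of an interval exchange map with admissible
combinatorial data are rationally independent, then `T` satisfies Keane's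
condition. -/
theorem rationally_independent_implies_keane
    {A : Type} [Fintype A] [DecidableEq A] {d : ℕ}
    (hd : 2 ≤ d) (hcard : Fintype.card A = d)
    (D : IEMData A d) (hD : GoodData D)
    (T : ℝ → ℝ) (hT : IsIEMOf T D)
    (hind : ∀ n : A → ℤ, (∑ α, (n α : ℝ) * D.len α) = 0 → ∀ α, n α = 0) :
    KeaneCond T D :=
  rationally_independent_implies_keane_general D hD T hT hind
end

section
/- For an interval exchange map T with no orbit segment starting and ending at a discontinuity, in the infinite path in the extended Rauzy diagram associated to the iterates 𝒱^k(T) of Rauzy–Veech induction, every name α ∈ A is taken infinitely many times. -/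
open MeasureTheory Finset

namespace IEM

variable {A : Type} [Fintype A] [DecidableEq A] {d : ℕ}

/-- One step of Rauzy–Veech induction `𝒱` on data, of type `ε`, with winner
`w` (satisfying `π_ε(w) = d`) and loser `u` (satisfying `π_{1-ε}(u) = d`,
`λ_u < λ_w`): the new lengths are `λ̂_α = λ_α` for `α ≠ w`,
`λ̂_w = λ_w − λ_u`, the ordering `π_ε` is kept and `π_{1-ε}` is replaced
by `π̂_{1-ε}` as in the Rauzy operation `ℛ_ε`.  The *name* of the
associated arrow in the Rauzy diagram is the loser `u`. -/
def RVStep (D D' : IEMData A d) (ε : Bool) (w u : A) : Prop :=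
  ((if ε then D.p1 else D.p0) w : ℕ) = d - 1 ∧
  ((if ε then D.p0 else D.p1) u : ℕ) = d - 1 ∧
  D.len u < D.len w ∧
  D'.len = Function.update D.len w (D.len w - D.len u) ∧
  (if ε then D'.p1 else D'.p0) = (if ε then D.p1 else D.p0) ∧
  (∀ α, (((if ε then D'.p0 else D'.p1) α : ℕ)) =
    if α = u then ((if ε then D.p0 else D.p1) w : ℕ) + 1
    else if ((if ε then D.p0 else D.p1) α : ℕ) ≤ ((if ε then D.p0 else D.p1) w : ℕ)
      then ((if ε then D.p0 else D.p1) α : ℕ)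
    else ((if ε then D.p0 else D.p1) α : ℕ) + 1)

/-- Elementary Rauzy–Veech matrix of a step with winner `w` and loser `u`:
`λ(k) = stepMat w u · λ(k+1)`. -/
def stepMat (w u : A) : Matrix A A ℕ :=
  1 + Matrix.single w u 1

/-- Ordered product `E a · E (a+1) ⋯ E (b-1)` of matrices. -/
def prodMat (E : ℕ → Matrix A A ℕ) (a b : ℕ) : Matrix A A ℕ :=
  ((List.range' a (b - a)).map E).prod

/-- The norm `‖Q‖ = max_β Σ_α Q_{αβ}`. -/
def matNorm (Q : Matrix A A ℕ) : ℕ :=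
  Finset.univ.sup fun β => ∑ α, Q α β

/-- All the data of the Rauzy–Veech–Zorich continued fraction algorithm:
the sequence `D j` of data of the iterates `𝒱^j(T)`, the types `eps j`,
winners `win j` and losers (names) `los j` of the successive steps, the
acceleration times `kk n` (so that `T(n) = 𝒱^{kk n}(T)`), and the
accelerated maps `Tn n = T(n)`. -/
structure ZorichData (A : Type) (d : ℕ) where
  D : ℕ → IEMData A d
  eps : ℕ → Bool
  win : ℕ → A
  los : ℕ → A
  kk : ℕ → ℕ
  Tn : ℕ → ℝ → ℝ

/-- The accelerated Zorich matrices `Q(m,n) = Z(m+1)⋯Z(n)`, obtained as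
the ordered product of the elementary Rauzy–Veech matrices of the steps
between `kk m` and `kk n`. -/
def Qacc (Z : ZorichData A d) (m n : ℕ) : Matrix A A ℕ :=
  prodMat (fun j => stepMat (Z.win j) (Z.los j)) (Z.kk m) (Z.kk n)

/-- `Z` is a valid run of the accelerated Zorich algorithm: the initial data
is good, each step is a Rauzy–Veech induction step, `kk 0 = 0`, each
acceleration window `[kk n, kk (n+1))` is the largest interval of steps
starting at `kk n` whose names do not exhaust the alphabet `A` (so that the
names in `[kk n, kk (n+1)]` do exhaust `A`), and `Tn n` is the interval
exchange map of the data `D (kk n)`. -/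
def ZorichOK (Z : ZorichData A d) : Prop :=
  GoodData (Z.D 0) ∧
  (∀ j : ℕ, RVStep (Z.D j) (Z.D (j + 1)) (Z.eps j) (Z.win j) (Z.los j)) ∧
  Z.kk 0 = 0 ∧
  (∀ n : ℕ, Z.kk n < Z.kk (n + 1)) ∧
  (∀ n : ℕ, ¬ ∀ a : A, ∃ j : ℕ, Z.kk n ≤ j ∧ j < Z.kk (n + 1) ∧ Z.los j = a) ∧
  (∀ n : ℕ, ∀ a : A, ∃ j : ℕ, Z.kk n ≤ j ∧ j ≤ Z.kk (n + 1) ∧ Z.los j = a) ∧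
  (∀ n : ℕ, IsIEMOf (Z.Tn n) (Z.D (Z.kk n)))

end IEM

namespace IEM

section Aux

variable {A : Type} [Fintype A] [DecidableEq A] {d : ℕ}

/-- Side `s` of the combinatorial data: `true ↦ p0`, `false ↦ p1`. -/
def pside (s : Bool) (Dj : IEMData A d) : A → Fin d := cond s Dj.p0 Dj.p1

lemma bool_ne_not {s t : Bool} (h : s ≠ t) : s = !t := by
  cases s <;> cases t <;> simp_all

lemma pside_bij {Dj : IEMData A d} (hg : GoodData Dj) (s : Bool) :
    Function.Bijective (pside s Dj) := by
  cases s
  · exact hg.2.1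
  · exact hg.1

lemma pside_inj {Dj : IEMData A d} (hg : GoodData Dj) (s : Bool) :
    Function.Injective (pside s Dj) := (pside_bij hg s).injective

lemma rv_spec {Dj Dj' : IEMData A d} {ε : Bool} {w u : A} (h : RVStep Dj Dj' ε w u) :
    ((pside (!ε) Dj w : ℕ) = d - 1) ∧ ((pside ε Dj u : ℕ) = d - 1) ∧
    Dj.len u < Dj.len w ∧
    Dj'.len = Function.update Dj.len w (Dj.len w - Dj.len u) ∧
    pside (!ε) Dj' = pside (!ε) Dj ∧
    (∀ α, ((pside ε Dj' α : ℕ)) =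
      if α = u then ((pside ε Dj w : ℕ)) + 1
      else if ((pside ε Dj α : ℕ)) ≤ ((pside ε Dj w : ℕ)) then ((pside ε Dj α : ℕ))
      else ((pside ε Dj α : ℕ)) + 1) := by
  cases ε <;> simpa [pside, RVStep] using h

lemma update_injective {p p' : A → Fin d} (hp : Function.Injective p) {w u : A}
    (hwu : w ≠ u)
    (hspec : ∀ α, ((p' α : ℕ)) = if α = u then (p w : ℕ) + 1
      else if ((p α : ℕ)) ≤ (p w : ℕ) then ((p α : ℕ)) else ((p α : ℕ)) + 1) :
    Function.Injective p' := by
  have hval : ∀ a b : A, (p a : ℕ) = (p b : ℕ) → a = b := fun a b h => hp (Fin.val_injective h)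
  intro a b hab
  have h : (p' a : ℕ) = (p' b : ℕ) := by rw [hab]
  rw [hspec a, hspec b] at h
  by_cases ha : a = u <;> by_cases hb : b = u
  · rw [ha, hb]
  · rw [if_pos ha, if_neg hb] at h
    split_ifs at h with h2
    · exact absurd h (by omega)
    · exact absurd (le_of_eq (show (p b : ℕ) = (p w : ℕ) by omega)) h2
  · rw [if_neg ha, if_pos hb] at h
    split_ifs at h with h2
    · exact absurd h (by omega)
    · exact absurd (le_of_eq (show (p a : ℕ) = (p w : ℕ) by omega)) h2
  · rw [if_neg ha, if_neg hb] at h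
    split_ifs at h with h2 h3 h3
    · exact hval a b h
    · exact absurd h (by omega)
    · exact absurd h (by omega)
    · exact hval a b (by omega)

lemma admissible_step (hd : 2 ≤ d) {P K P' : A → Fin d}
    (hPinj : Function.Injective P) {w u : A} (hwu : w ≠ u)
    (hKw : (K w : ℕ) = d - 1) (hPu : (P u : ℕ) = d - 1)
    (hspec : ∀ α, ((P' α : ℕ)) = if α = u then (P w : ℕ) + 1
      else if ((P α : ℕ)) ≤ (P w : ℕ) then ((P α : ℕ)) else ((P α : ℕ)) + 1)
    (hadm : ∀ k, 0 < k → k < d → {α | (P α : ℕ) < k} ≠ {α | (K α : ℕ) < k}) :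
    ∀ k, 0 < k → k < d → {α | (P' α : ℕ) < k} ≠ {α | (K α : ℕ) < k} := by
  intro k hk0 hkd h
  have hPwu : (P w : ℕ) ≠ (P u : ℕ) := fun hh => hwu (hPinj (Fin.val_injective hh))
  have hPw_lt : (P w : ℕ) < d - 1 := by
    have := (P w).isLt
    omega
  by_cases hcase : k ≤ (P w : ℕ) + 1
  · apply hadm k hk0 hkd
    have key : ∀ α, ((P α : ℕ) < k ↔ (P' α : ℕ) < k) := by
      intro α
      rw [hspec α]
      by_cases hα : α = u
      · subst hα; rw [if_pos rfl, hPu]; omega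
      · rw [if_neg hα]; split_ifs with h2 <;> omega
    ext α
    have hh := Set.ext_iff.mp h α
    simp only [Set.mem_setOf_eq] at hh ⊢
    exact (key α).trans hh
  · have hw1 : (P' w : ℕ) < k := by
      rw [hspec w, if_neg hwu, if_pos le_rfl]; omega
    have hw2 : ¬ ((K w : ℕ) < k) := by rw [hKw]; omega
    have hh := Set.ext_iff.mp h w
    simp only [Set.mem_setOf_eq] at hh
    exact hw2 (hh.mp hw1)

lemma good_step (hd : 2 ≤ d) (hcard : Fintype.card A = d) {Dj Dj' : IEMData A d} {ε : Bool}
    {w u : A} (hg : GoodData Dj) (h : RVStep Dj Dj' ε w u) : GoodData Dj' := by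
  obtain ⟨hKw, hPu, hlt, hlen, hkeep, hspec⟩ := rv_spec h
  have hwu : w ≠ u := fun he => absurd hlt (by rw [he]; exact lt_irrefl _)
  have hPinj : Function.Injective (pside ε Dj) := pside_inj hg ε
  have hP'inj : Function.Injective (pside ε Dj') := update_injective hPinj hwu hspec
  have hP'bij : Function.Bijective (pside ε Dj') :=
    (Fintype.bijective_iff_injective_and_card _).mpr ⟨hP'inj, by simp [hcard]⟩
  have hK'bij : Function.Bijective (pside (!ε) Dj') := by
    rw [hkeep]; exact pside_bij hg (!ε)
  have hlenpos : ∀ α, 0 < Dj'.len α := by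
    intro α; rw [hlen, Function.update_apply]
    split_ifs with hα
    · linarith
    · exact hg.2.2.1 α
  have hadm' : ∀ k, 0 < k → k < d →
      {α | (pside ε Dj' α : ℕ) < k} ≠ {α | (pside (!ε) Dj α : ℕ) < k} := by
    apply admissible_step hd hPinj hwu hKw hPu hspec
    intro k hk0 hkd
    cases ε
    · exact fun hh => (hg.2.2.2 k hk0 hkd) hh.symm
    · exact hg.2.2.2 k hk0 hkd
  cases ε
  · exact ⟨hK'bij, hP'bij, hlenpos, fun k hk0 hkd => by
      rw [show Dj'.p0 = Dj.p0 from hkeep]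
      exact fun hh => (hadm' k hk0 hkd) hh.symm⟩
  · exact ⟨hP'bij, hK'bij, hlenpos, fun k hk0 hkd => by
      rw [show Dj'.p1 = Dj.p1 from hkeep]
      exact hadm' k hk0 hkd⟩

lemma mono_bdd_const {h : ℕ → ℕ} {d : ℕ} (hm : ∀ k, h k ≤ h (k + 1)) (hb : ∀ k, h k < d) :
    ∃ K, ∀ l, K ≤ l → h l = h K := by
  by_contra hc
  push_neg at hc
  have hmono : ∀ k l, k ≤ l → h k ≤ h l := by
    intro k l hkl
    induction l, hkl using Nat.le_induction with
    | base => exact le_rfl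
    | succ l hl ih => exact le_trans ih (hm l)
  have hgrow : ∀ n, ∃ l, n ≤ h l := by
    intro n; induction n with
    | zero => exact ⟨0, Nat.zero_le _⟩
    | succ n ih =>
      obtain ⟨l, hl⟩ := ih
      obtain ⟨l', hl'1, hl'2⟩ := hc l
      have := hmono l l' hl'1
      exact ⟨l', by omega⟩
  obtain ⟨l, hl⟩ := hgrow d
  exact absurd (hb l) (by omega)

lemma card_filter_coe_lt {p : A → Fin d} (hb : Function.Bijective p) (m : ℕ) (hm : m ≤ d) :
    (univ.filter fun α => (p α : ℕ) < m).card = m := by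
  have h1 : (univ.filter fun α => (p α : ℕ) < m).image p
      = univ.filter fun i : Fin d => (i : ℕ) < m := by
    ext i
    simp only [mem_image, mem_filter, mem_univ, true_and]
    constructor
    · rintro ⟨α, hα, rfl⟩; exact hα
    · intro hi; obtain ⟨α, rfl⟩ := hb.surjective i; exact ⟨α, hi, rfl⟩
  have h2 := Finset.card_image_of_injective
    (univ.filter fun α => (p α : ℕ) < m) hb.injective
  rw [h1] at h2
  rw [← h2]
  have h3 : (univ.filter fun i : Fin d => (i : ℕ) < m)
      = univ.image (Fin.castLE hm) := by
    ext i
    simp only [mem_filter, mem_univ, true_and, mem_image]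
    constructor
    · intro hi; exact ⟨⟨(i : ℕ), hi⟩, Fin.ext rfl⟩
    · rintro ⟨k, rfl⟩; exact k.isLt
  rw [h3, Finset.card_image_of_injective _ (Fin.castLE_injective hm), card_univ,
    Fintype.card_fin]

section Seq

variable {D : ℕ → IEMData A d} {eps : ℕ → Bool} {win los : ℕ → A}

lemma good_all (hstep : ∀ j : ℕ, RVStep (D j) (D (j + 1)) (eps j) (win j) (los j))
    (hd : 2 ≤ d) (hcard : Fintype.card A = d) (hD : GoodData (D 0)) :
    ∀ j, GoodData (D j) := by
  intro j
  induction j with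
  | zero => exact hD
  | succ j ih => exact good_step hd hcard ih (hstep j)

lemma total_pos (hg : ∀ j, GoodData (D j)) (hd : 2 ≤ d) (hcard : Fintype.card A = d)
    (j : ℕ) : 0 < totalLen (D j) := by
  haveI : Nonempty A := Fintype.card_pos_iff.mp (by rw [hcard]; omega)
  exact Finset.sum_pos (fun α _ => (hg j).2.2.1 α) Finset.univ_nonempty

variable (hstep : ∀ j : ℕ, RVStep (D j) (D (j + 1)) (eps j) (win j) (los j))

include hstep

lemma wlne (j : ℕ) : win j ≠ los j := by
  intro h
  have := (rv_spec (hstep j)).2.2.1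
  rw [h] at this
  exact lt_irrefl _ this

lemma len_succ (j : ℕ) (α : A) :
    (D (j + 1)).len α = if α = win j then (D j).len (win j) - (D j).len (los j)
      else (D j).len α := by
  rw [(rv_spec (hstep j)).2.2.2.1, Function.update_apply]

lemma los_top (j : ℕ) : ((pside (eps j) (D j) (los j) : ℕ)) = d - 1 :=
  (rv_spec (hstep j)).2.1

lemma win_top (j : ℕ) : ((pside (!(eps j)) (D j) (win j) : ℕ)) = d - 1 :=
  (rv_spec (hstep j)).1

lemma kept_eq (j : ℕ) : pside (!(eps j)) (D (j + 1)) = pside (!(eps j)) (D j) :=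
  (rv_spec (hstep j)).2.2.2.2.1

lemma upd_spec (j : ℕ) : ∀ α, ((pside (eps j) (D (j + 1)) α : ℕ)) =
    if α = los j then ((pside (eps j) (D j) (win j) : ℕ)) + 1
    else if ((pside (eps j) (D j) α : ℕ)) ≤ ((pside (eps j) (D j) (win j) : ℕ))
      then ((pside (eps j) (D j) α : ℕ))
    else ((pside (eps j) (D j) α : ℕ)) + 1 :=
  (rv_spec (hstep j)).2.2.2.2.2

lemma pside_kept_of_ne (j : ℕ) {s : Bool} (hs : s ≠ eps j) :
    pside s (D (j + 1)) = pside s (D j) := by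
  have : s = !(eps j) := by cases s <;> cases h : eps j <;> simp_all
  rw [this]; exact kept_eq hstep j

lemma pos_mono (j : ℕ) {α : A} (hα : α ≠ los j) (s : Bool) :
    (pside s (D j) α : ℕ) ≤ (pside s (D (j + 1)) α : ℕ) := by
  by_cases hs : s = eps j
  · subst hs
    rw [upd_spec hstep j α, if_neg hα]
    split_ifs <;> omega
  · rw [pside_kept_of_ne hstep j hs]

lemma pos_keep_upd (j : ℕ) {α : A} (hα : α ≠ los j)
    (hle : (pside (eps j) (D j) α : ℕ) ≤ (pside (eps j) (D j) (win j) : ℕ)) :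
    (pside (eps j) (D (j + 1)) α : ℕ) = (pside (eps j) (D j) α : ℕ) := by
  rw [upd_spec hstep j α, if_neg hα, if_pos hle]

lemma pos_incr (j : ℕ) {α : A} (hα : α ≠ los j)
    (hgt : ¬ (pside (eps j) (D j) α : ℕ) ≤ (pside (eps j) (D j) (win j) : ℕ)) :
    (pside (eps j) (D (j + 1)) α : ℕ) = (pside (eps j) (D j) α : ℕ) + 1 := by
  rw [upd_spec hstep j α, if_neg hα, if_neg hgt]

lemma win_succ_eq (hg : ∀ j, GoodData (D j)) (j : ℕ) (h : eps (j + 1) = eps j) :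
    win (j + 1) = win j := by
  have h1 := win_top hstep (j + 1)
  rw [h, kept_eq hstep j] at h1
  exact pside_inj (hg j) (!(eps j)) (Fin.val_injective (h1.trans (win_top hstep j).symm))

lemma len_const_of_no_win (j : ℕ) {α : A} :
    ∀ k, j ≤ k → (∀ i, j ≤ i → i < k → win i ≠ α) → (D k).len α = (D j).len α := by
  intro k hjk
  induction k, hjk using Nat.le_induction with
  | base => intro _; rfl
  | succ k hk ih =>
    intro h
    rw [len_succ hstep k α, if_neg (fun he => h k hk (by omega) he.symm),
      ih (fun i hi hik => h i hi (by omega))]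

lemma total_succ (j : ℕ) :
    totalLen (D (j + 1)) = totalLen (D j) - (D j).len (los j) := by
  have h := (rv_spec (hstep j)).2.2.2.1
  unfold totalLen
  rw [h, Finset.sum_update_of_mem (mem_univ (win j)), Finset.sdiff_singleton_eq_erase,
    ← Finset.add_sum_erase _ (D j).len (mem_univ (win j))]
  ring


lemma losers_small (hg : ∀ j, GoodData (D j)) (hd : 2 ≤ d) (hcard : Fintype.card A = d) :
    ∀ c : ℝ, 0 < c → ∃ N, ∀ j, N ≤ j → (D j).len (los j) < c := by
  intro c hc
  by_contra hcon
  push_neg at hcon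
  have hsum : ∀ j, ∑ i ∈ range j, (D i).len (los i) = totalLen (D 0) - totalLen (D j) := by
    intro j; induction j with
    | zero => simp
    | succ j ih => rw [Finset.sum_range_succ, ih, total_succ hstep j]; ring
  have hlt : ∀ j, ∑ i ∈ range j, (D i).len (los i) < totalLen (D 0) := by
    intro j
    rw [hsum j]
    have := total_pos hg hd hcard j
    linarith
  have hgrow : ∀ n : ℕ, ∃ j, (n : ℝ) * c ≤ ∑ i ∈ range j, (D i).len (los i) := by
    intro n; induction n with
    | zero => exact ⟨0, by simp⟩
    | succ n ih =>
      obtain ⟨j, hj⟩ := ih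
      obtain ⟨j', hj'1, hj'2⟩ := hcon j
      have hmono : ∑ i ∈ range j, (D i).len (los i) ≤ ∑ i ∈ range j', (D i).len (los i) :=
        Finset.sum_le_sum_of_subset_of_nonneg (Finset.range_subset_range.mpr hj'1)
          (fun i _ _ => le_of_lt ((hg i).2.2.1 (los i)))
      refine ⟨j' + 1, ?_⟩
      rw [Finset.sum_range_succ]
      push_cast
      linarith
  obtain ⟨n, hn⟩ := exists_nat_gt (totalLen (D 0) / c)
  have h1 : totalLen (D 0) < n * c := by rwa [div_lt_iff₀ hc] at hn
  obtain ⟨j, hj⟩ := hgrow n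
  have := hlt j
  linarith

lemma eps_switches (hg : ∀ j, GoodData (D j)) (hd : 2 ≤ d) (hcard : Fintype.card A = d) :
    ∀ M, ∃ j, M ≤ j ∧ eps (j + 1) ≠ eps j := by
  intro M
  by_contra hc
  push_neg at hc
  have hwconst : ∀ j, M ≤ j → win j = win M := by
    intro j hj
    induction j, hj using Nat.le_induction with
    | base => rfl
    | succ j hj ih => rw [win_succ_eq hstep hg j (hc j hj), ih]
  haveI : Nonempty A := Fintype.card_pos_iff.mp (by rw [hcard]; omega)
  set c := Finset.univ.inf' Finset.univ_nonempty (D M).len with hc_def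
  have hc_pos : 0 < c := by
    rw [hc_def, Finset.lt_inf'_iff]
    exact fun α _ => (hg M).2.2.1 α
  have hlosc : ∀ k : ℕ, c ≤ (D (M + k)).len (los (M + k)) := by
    intro k
    have h1 := wlne hstep (M + k)
    rw [hwconst (M + k) (by omega)] at h1
    have hconst : (D (M + k)).len (los (M + k)) = (D M).len (los (M + k)) :=
      len_const_of_no_win hstep M (M + k) (by omega)
        (fun i hi hik => by rw [hwconst i hi]; exact h1)
    rw [hconst]
    exact Finset.inf'_le _ (mem_univ _)
  have hbound : ∀ k : ℕ, (D (M + k)).len (win M) ≤ (D M).len (win M) - k * c := by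
    intro k
    induction k with
    | zero => simp
    | succ k ih =>
      have h1 : (D (M + k + 1)).len (win M)
          = (D (M + k)).len (win M) - (D (M + k)).len (los (M + k)) := by
        rw [len_succ hstep (M + k) (win M), if_pos (hwconst (M + k) (by omega)).symm,
          hwconst (M + k) (by omega)]
      have h2 := hlosc k
      have h3 : (M + (k + 1)) = (M + k + 1) := by omega
      rw [h3, h1]
      push_cast
      linarith
  obtain ⟨n, hn⟩ := exists_nat_gt ((D M).len (win M) / c)
  have h3 : (D M).len (win M) < n * c := by rwa [div_lt_iff₀ hc_pos] at hn
  have h4 := hbound n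
  have h5 := (hg (M + n)).2.2.1 (win M)
  linarith

lemma eps_both (hg : ∀ j, GoodData (D j)) (hd : 2 ≤ d) (hcard : Fintype.card A = d) :
    ∀ (s : Bool) (M : ℕ), ∃ j, M ≤ j ∧ eps j = s := by
  intro s M
  obtain ⟨j, hj, hne⟩ := eps_switches hstep hg hd hcard M
  by_cases h : eps j = s
  · exact ⟨j, hj, h⟩
  · refine ⟨j + 1, by omega, ?_⟩
    cases s <;> cases h1 : eps j <;> cases h2 : eps (j + 1) <;> simp_all

end Seq

end Aux

end IEM

open IEM in
/-- for an i.e.m. with no orbit segment starting and ending at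
a discontinuity (Keane's condition), every name `α ∈ A` is taken infinitely
many times in the infinite path in the Rauzy diagram associated to the
iterates `𝒱^k(T)` (the name of the `j`-th arrow being the loser `los j`). -/
theorem names_taken_infinitely_often
    {A : Type} [Fintype A] [DecidableEq A] {d : ℕ}
    (hd : 2 ≤ d) (hcard : Fintype.card A = d)
    (D : ℕ → IEMData A d) (hD : GoodData (D 0))
    (eps : ℕ → Bool) (win los : ℕ → A)
    (hstep : ∀ j : ℕ, RVStep (D j) (D (j + 1)) (eps j) (win j) (los j))
    (T : ℝ → ℝ) (hT : IsIEMOf T (D 0))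
    (hK : KeaneCond T (D 0)) :
    ∀ a : A, ∀ N : ℕ, ∃ j : ℕ, N ≤ j ∧ los j = a := by
  classical
  by_contra hcon
  push_neg at hcon
  obtain ⟨a, N0, hN0⟩ := hcon
  have hg : ∀ j, GoodData (D j) := good_all hstep hd hcard hD
  set Bs : Finset A := univ.filter fun α => ∃ N, ∀ j, N ≤ j → los j ≠ α with hBsdef
  have hmemBs : ∀ α, α ∈ Bs ↔ ∃ N, ∀ j, N ≤ j → los j ≠ α := by
    intro α; rw [hBsdef]; simp
  have haB : a ∈ Bs := (hmemBs a).mpr ⟨N0, hN0⟩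
  have hInf_of_not : ∀ γ, γ ∉ Bs → ∀ N, ∃ j, N ≤ j ∧ los j = γ := by
    intro γ h N
    have h2 : ¬ ∃ N, ∀ j, N ≤ j → los j ≠ γ := fun hh => h ((hmemBs γ).mpr hh)
    push_neg at h2
    exact h2 N
  have hBsN : ∀ α ∈ Bs, ∃ N, ∀ j, N ≤ j → los j ≠ α := fun α hα => (hmemBs α).mp hα
  choose! NB hNB using hBsN
  set M0 := Bs.sup NB with hM0def
  have hlosBs : ∀ j, M0 ≤ j → los j ∉ Bs := by
    intro j hj hmem
    have h1 : NB (los j) ≤ M0 := by rw [hM0def]; exact Finset.le_sup hmem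
    exact hNB _ hmem j (le_trans h1 hj) rfl
  have hfreezeEx : ∀ α ∈ Bs, ∀ s : Bool, ∃ K, ∀ l, K ≤ l →
      (pside s (D (M0 + l)) α : ℕ) = (pside s (D (M0 + K)) α : ℕ) := by
    intro α hα s
    apply mono_bdd_const (d := d)
    · intro k
      exact pos_mono hstep (M0 + k)
        (fun h => hlosBs (M0 + k) (Nat.le_add_right _ _) (h ▸ hα)) s
    · intro k
      exact (pside s (D (M0 + k)) α).isLt
  choose! KB hKB using hfreezeEx
  set KK : ℕ := Bs.sup (fun α => max (KB α true) (KB α false)) with hKKdef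
  set M1 := M0 + KK with hM1def
  have hM1ge : M0 ≤ M1 := Nat.le_add_right _ _
  have hfreeze : ∀ α ∈ Bs, ∀ s : Bool, ∀ j, M1 ≤ j →
      (pside s (D j) α : ℕ) = (pside s (D M1) α : ℕ) := by
    intro α hα s j hj
    obtain ⟨l, rfl⟩ : ∃ l, j = M0 + l := ⟨j - M0, by omega⟩
    have h1 : KB α s ≤ KK := by
      rw [hKKdef]
      refine le_trans ?_ (Finset.le_sup hα)
      cases s
      · exact le_max_right _ _
      · exact le_max_left _ _
    have h2 : KB α s ≤ l := by omega
    rw [hKB α hα s l h2, hM1def, hKB α hα s KK h1]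
  have hBne : Bs.Nonempty := ⟨a, haB⟩
  have hβexist := fun s : Bool =>
    Finset.exists_max_image Bs (fun β => (pside s (D M1) β : ℕ)) hBne
  choose βm hβmem hβmax using hβexist
  -- C1 : at every late step, on the updated side, Bs letters are below the winner
  have hC1 : ∀ j, M1 ≤ j → ∀ β ∈ Bs,
      (pside (eps j) (D j) β : ℕ) ≤ (pside (eps j) (D j) (win j) : ℕ) := by
    intro j hj β hβm
    by_contra hgt
    have hne : β ≠ los j := fun h => hlosBs j (le_trans hM1ge hj) (h ▸ hβm)
    have h1 := pos_incr hstep j hne hgt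
    have h2 := hfreeze β hβm (eps j) j hj
    have h3 := hfreeze β hβm (eps j) (j + 1) (by omega)
    omega
  -- C2 : the max Bs position is < d - 1 on both sides
  have hC2 : ∀ s : Bool, (pside s (D M1) (βm s) : ℕ) < d - 1 := by
    intro s
    obtain ⟨j, hj, hsj⟩ := eps_both hstep hg hd hcard s M1
    have h2 := los_top hstep j
    rw [hsj] at h2
    have hne : (pside s (D M1) (βm s) : ℕ) ≠ d - 1 := by
      intro he
      have h1 : (pside s (D j) (βm s) : ℕ) = d - 1 := by
        rw [hfreeze (βm s) (hβmem s) s j hj, he]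
      have h4 : βm s = los j := pside_inj (hg j) s (Fin.val_injective (h1.trans h2.symm))
      exact hlosBs j (le_trans hM1ge hj) (h4 ▸ hβmem s)
    have := (pside s (D M1) (βm s)).isLt
    omega
  -- C3 : only Bs letters can sit below the max Bs position
  have hC3 : ∀ s : Bool, ∀ γ, γ ∉ Bs → ∀ j, M1 ≤ j →
      ¬ ((pside s (D j) γ : ℕ) ≤ (pside s (D M1) (βm s) : ℕ)) := by
    intro s γ hγ j hj hle
    have hfr : ∀ k, j ≤ k → (pside s (D k) γ : ℕ) = (pside s (D j) γ : ℕ) := by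
      intro k hk
      induction k, hk using Nat.le_induction with
      | base => rfl
      | succ k hk ih =>
        by_cases hs : eps k = s
        · have hkM1 : M1 ≤ k := le_trans hj hk
          have hd2 := hC2 s
          have hγl : γ ≠ los k := by
            intro h
            have hlt := los_top hstep k
            rw [hs, ← h] at hlt
            omega
          have hb := hC1 k hkM1 (βm s) (hβmem s)
          rw [hs] at hb
          have hbv : (pside s (D k) (βm s) : ℕ) = (pside s (D M1) (βm s) : ℕ) :=
            hfreeze (βm s) (hβmem s) s k hkM1
          have h5 : (pside (eps k) (D (k + 1)) γ : ℕ) = (pside (eps k) (D k) γ : ℕ) := by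
            apply pos_keep_upd hstep k hγl
            rw [hs]
            omega
          rw [hs] at h5
          rw [h5, ih]
        · rw [pside_kept_of_ne hstep k (fun h => hs h.symm)]
          exact ih
    have hnw : ∀ k, j ≤ k → win k ≠ γ := by
      intro k hk h
      by_cases hs : eps k = s
      · have hkM1 : M1 ≤ k := le_trans hj hk
        have hb := hC1 k hkM1 (βm s) (hβmem s)
        rw [hs, h] at hb
        have hbv : (pside s (D k) (βm s) : ℕ) = (pside s (D M1) (βm s) : ℕ) :=
          hfreeze (βm s) (hβmem s) s k hkM1
        have hγv := hfr k hk
        have h6 : (pside s (D k) (βm s) : ℕ) = (pside s (D k) γ : ℕ) := by omega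
        have h7 : βm s = γ := pside_inj (hg k) s (Fin.val_injective h6)
        exact hγ (h7 ▸ hβmem s)
      · have hs' : s = !(eps k) := bool_ne_not (fun hh => hs hh.symm)
        have h1 := win_top hstep k
        rw [h, ← hs'] at h1
        have h2 := hfr k hk
        have := hC2 s
        omega
    have hconst : ∀ k, j ≤ k → (D k).len γ = (D j).len γ := fun k hk =>
      len_const_of_no_win hstep j k hk (fun i hi _ => hnw i hi)
    have hcpos : 0 < (D j).len γ := (hg j).2.2.1 γ
    obtain ⟨N', hN'⟩ := losers_small hstep hg hd hcard ((D j).len γ) hcpos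
    obtain ⟨i, hi, hieq⟩ := hInf_of_not γ hγ (max N' j)
    have h1 := hN' i (le_trans (le_max_left _ _) hi)
    rw [hieq, hconst i (le_trans (le_max_right _ _) hi)] at h1
    exact lt_irrefl _ h1
  -- C4 : the set of letters below the max Bs position is exactly Bs (both sides)
  have hsetEq : ∀ s : Bool,
      {α : A | ((pside s (D M1) α : ℕ)) < (pside s (D M1) (βm s) : ℕ) + 1}
        = {α : A | α ∈ Bs} := by
    intro s
    ext γ
    simp only [Set.mem_setOf_eq]
    constructor
    · intro hlt
      by_contra hγ
      exact hC3 s γ hγ M1 le_rfl (by omega)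
    · intro hγ
      have := hβmax s γ hγ
      omega
  have hcardEq : ∀ s : Bool, (pside s (D M1) (βm s) : ℕ) + 1 = Bs.card := by
    intro s
    have hfs : (univ.filter fun α =>
        (pside s (D M1) α : ℕ) < (pside s (D M1) (βm s) : ℕ) + 1) = Bs := by
      ext γ
      simp only [mem_filter, mem_univ, true_and]
      have h1 := Set.ext_iff.mp (hsetEq s) γ
      simpa using h1
    rw [← hfs, card_filter_coe_lt (pside_bij (hg M1) s) _ (by have := hC2 s; omega)]
  have hadm := (hg M1).2.2.2
  have hk0 : 0 < Bs.card := Finset.card_pos.mpr hBne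
  have hkd : Bs.card < d := by
    have h1 := hC2 true
    have h2 := hcardEq true
    omega
  apply hadm Bs.card hk0 hkd
  have e0 := hsetEq true
  have e1 := hsetEq false
  rw [hcardEq true] at e0
  rw [hcardEq false] at e1
  exact e0.trans e1.symm
end

section
/- Let T(n) be the accelerated Zorich sequence of induced maps of an i.e.m. T satisfying Keane's condition, with matrices Q(m,n). For m < n, T(n) is the first return map of T(m) on I(n) = [0, Σ_α λ_α(n)); for x ∈ I_β(n), the return time of x to I(n) under T(m) is Q_β(m,n) = Σ_α Q_{αβ}(m,n), and the number of times 0 ≤ l < Q_β(m,n) with (T(m))^l(x) ∈ I_α(m) equals Q_{αβ}(m,n). -/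
open MeasureTheory Finset

namespace IEMAux

open IEM Finset

variable {A : Type} [Fintype A] [DecidableEq A] {d : ℕ}

/-- generic left endpoint -/
def lpt (p : A → Fin d) (len : A → ℝ) (α : A) : ℝ :=
  ∑ β ∈ univ.filter (fun β => p β < p α), len β

lemma leftPt0_eq (D : IEMData A d) (α : A) : leftPt0 D α = lpt D.p0 D.len α := rfl
lemma leftPt1_eq (D : IEMData A d) (α : A) : leftPt1 D α = lpt D.p1 D.len α := rfl

lemma lpt_nonneg {p : A → Fin d} {len : A → ℝ} (hlen : ∀ a, 0 < len a) (α : A) :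
    0 ≤ lpt p len α :=
  Finset.sum_nonneg fun β _ => (hlen β).le

lemma filter_le_eq_insert {p : A → Fin d} (hp : Function.Injective p) (α : A) :
    univ.filter (fun β => p β ≤ p α) = insert α (univ.filter (fun β => p β < p α)) := by
  ext γ
  simp only [mem_filter, mem_univ, true_and, mem_insert]
  constructor
  · intro h
    rcases lt_or_eq_of_le h with h | h
    · exact Or.inr h
    · exact Or.inl (hp h)
  · rintro (rfl | h)
    · exact le_refl _
    · exact h.le

lemma lpt_add_len {p : A → Fin d} {len : A → ℝ} (hp : Function.Injective p) (α : A) :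
    lpt p len α + len α = ∑ β ∈ univ.filter (fun β => p β ≤ p α), len β := by
  rw [filter_le_eq_insert hp, Finset.sum_insert (by simp), lpt]
  ring

lemma lpt_mono {p : A → Fin d} {len : A → ℝ} (hp : Function.Injective p)
    (hlen : ∀ a, 0 < len a) {α γ : A} (h : p α < p γ) :
    lpt p len α + len α ≤ lpt p len γ := by
  rw [lpt_add_len hp]
  apply Finset.sum_le_sum_of_subset_of_nonneg
  · intro β hβ
    simp only [mem_filter, mem_univ, true_and] at hβ ⊢
    exact lt_of_le_of_lt hβ h
  · exact fun β _ _ => (hlen β).le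

lemma lpt_add_len_le {p : A → Fin d} {len : A → ℝ} (hp : Function.Injective p)
    (hlen : ∀ a, 0 < len a) (α : A) :
    lpt p len α + len α ≤ ∑ a, len a := by
  rw [lpt_add_len hp]
  apply Finset.sum_le_sum_of_subset_of_nonneg (Finset.filter_subset _ _)
  exact fun β _ _ => (hlen β).le

/-- uniqueness of the interval containing a point -/
lemma lpt_unique {p : A → Fin d} {len : A → ℝ} (hp : Function.Injective p)
    (hlen : ∀ a, 0 < len a) {α γ : A} {x : ℝ}
    (hα : x ∈ Set.Ico (lpt p len α) (lpt p len α + len α))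
    (hγ : x ∈ Set.Ico (lpt p len γ) (lpt p len γ + len γ)) : α = γ := by
  rcases lt_trichotomy (p α) (p γ) with h | h | h
  · have := lpt_mono hp hlen h
    exact absurd (lt_of_lt_of_le hα.2 (le_trans this hγ.1)) (lt_irrefl x)
  · exact hp h
  · have := lpt_mono hp hlen h
    exact absurd (lt_of_lt_of_le hγ.2 (le_trans this hα.1)) (lt_irrefl x)

/-- top interval: if `p t = d - 1` then `lpt t = total - len t` -/
lemma lpt_top {p : A → Fin d} {len : A → ℝ} (hp : Function.Injective p) {t : A}
    (ht : (p t : ℕ) = d - 1) : lpt p len t = (∑ a, len a) - len t := by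
  have hset : univ.filter (fun β => p β < p t) = univ.erase t := by
    ext γ
    simp only [mem_filter, mem_univ, true_and, mem_erase, and_true]
    constructor
    · intro h hγ; subst hγ; exact lt_irrefl _ h
    · intro h
      have h1 : (p γ : ℕ) < d := (p γ).isLt
      have h2 : (p γ : ℕ) ≠ d - 1 := by
        intro he
        exact h (hp (Fin.val_injective (he.trans ht.symm)))
      rw [Fin.lt_def, ht]
      omega
  rw [lpt, hset, Finset.sum_erase_eq_sub (mem_univ t)]

/-- existence of the interval containing a point -/
lemma lpt_cover {p : A → Fin d} {len : A → ℝ} (hp : Function.Bijective p)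
    (hlen : ∀ a, 0 < len a) {x : ℝ} (hx0 : 0 ≤ x) (hx1 : x < ∑ a, len a) :
    ∃ α, x ∈ Set.Ico (lpt p len α) (lpt p len α + len α) := by
  rcases isEmpty_or_nonempty A with hA | hA
  · rw [Finset.univ_eq_empty, Finset.sum_empty] at hx1; linarith
  have hd0 : 0 < d := (p (Classical.arbitrary A)).pos
  obtain ⟨α0, hα0⟩ := hp.2 ⟨0, hd0⟩
  have hs : (univ.filter fun α => lpt p len α ≤ x).Nonempty := by
    refine ⟨α0, ?_⟩
    simp only [mem_filter, mem_univ, true_and]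
    have : univ.filter (fun β => p β < p α0) = ∅ := by
      apply Finset.filter_false_of_mem
      intro β _
      rw [hα0]
      exact fun h => Nat.not_lt_zero _ (Fin.lt_def.mp h)
    rw [lpt, this, Finset.sum_empty]
    exact hx0
  obtain ⟨α, hαs, hmax⟩ := Finset.exists_max_image _ p hs
  have hαx : lpt p len α ≤ x := (mem_filter.mp hαs).2
  refine ⟨α, hαx, ?_⟩
  by_contra hcon
  push_neg at hcon
  by_cases h1 : (p α : ℕ) + 1 < d
  · obtain ⟨γ, hγ⟩ := hp.2 ⟨(p α : ℕ) + 1, h1⟩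
    have hlptγ : lpt p len γ = lpt p len α + len α := by
      rw [lpt_add_len hp.1, lpt]
      congr 1
      ext β
      simp only [mem_filter, mem_univ, true_and, Fin.lt_def, Fin.le_def, hγ, Fin.val_mk]
      omega
    have hγs : γ ∈ univ.filter fun α => lpt p len α ≤ x := by
      simp only [mem_filter, mem_univ, true_and, hlptγ]
      exact hcon
    have := hmax γ hγs
    simp only [Fin.le_def, hγ, Fin.val_mk] at this
    omega
  · have htop : (p α : ℕ) = d - 1 := by
      have := (p α).isLt; omega
    have : lpt p len α + len α = ∑ a, len a := by
      rw [lpt_add_len hp.1]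
      apply Finset.sum_congr _ (fun _ _ => rfl)
      apply Finset.filter_true_of_mem
      intro β _
      rw [Fin.le_def, htop]
      have := (p β).isLt
      omega
    linarith

/-- the modified side of a Rauzy-Veech step -/
lemma qside_lpt {q q' : A → Fin d} {len : A → ℝ} {w u : A}
    (hq : Function.Injective q) (huw : u ≠ w) (hu : (q u : ℕ) = d - 1)
    (hq' : ∀ α, ((q' α : ℕ)) = if α = u then (q w : ℕ) + 1
      else if (q α : ℕ) ≤ (q w : ℕ) then (q α : ℕ) else (q α : ℕ) + 1) :
    (∀ β, β ≠ u → lpt q' (Function.update len w (len w - len u)) β = lpt q len β) ∧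
    lpt q' (Function.update len w (len w - len u)) u = lpt q len w + (len w - len u) ∧
    Function.Injective q' := by
  have hd1 : 0 < d := (q u).pos
  have hne : ∀ β, β ≠ u → (q β : ℕ) ≠ d - 1 := by
    intro β hβ he
    exact hβ (hq (Fin.val_injective (he.trans hu.symm)))
  have hwlt : (q w : ℕ) < d - 1 := by
    have := (q w).isLt
    have := hne w (Ne.symm huw)
    omega
  refine ⟨?_, ?_, ?_⟩
  · intro β hβu
    have hβd := hne β hβu
    have hβlt := (q β).isLt
    by_cases hle : (q β : ℕ) ≤ (q w : ℕ)
    · have hset : univ.filter (fun γ => q' γ < q' β) = univ.filter (fun γ => q γ < q β) := by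
        ext γ
        simp only [mem_filter, mem_univ, true_and, Fin.lt_def, hq' γ, hq' β,
          if_neg hβu, if_pos hle]
        by_cases hγu : γ = u
        · subst hγu
          rw [if_pos rfl, hu]
          omega
        · rw [if_neg hγu]
          have := (q γ).isLt
          by_cases hc : (q γ : ℕ) ≤ (q w : ℕ)
          · rw [if_pos hc]
          · rw [if_neg hc]
            omega
      rw [lpt, hset]
      apply Finset.sum_congr rfl
      intro γ hγ
      simp only [mem_filter, mem_univ, true_and] at hγ
      rw [Function.update_of_ne]
      intro he; subst he
      exact absurd (Fin.lt_def.mp hγ) (by omega)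
    · push_neg at hle
      have hset : univ.filter (fun γ => q' γ < q' β)
          = insert u (univ.filter (fun γ => q γ < q β)) := by
        ext γ
        simp only [mem_filter, mem_univ, true_and, mem_insert, Fin.lt_def,
          hq' γ, hq' β, if_neg hβu, if_neg (not_le.mpr hle)]
        by_cases hγu : γ = u
        · subst hγu
          rw [if_pos rfl]
          simp only [true_or, iff_true]
          omega
        · rw [if_neg hγu]
          simp only [hγu, false_or]
          have := (q γ).isLt
          by_cases hc : (q γ : ℕ) ≤ (q w : ℕ)
          · rw [if_pos hc]; omega
          · rw [if_neg hc]; omega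
      have hu' : u ∉ univ.filter (fun γ => q γ < q β) := by
        simp only [mem_filter, mem_univ, true_and, Fin.lt_def, hu]
        omega
      have hw' : w ∈ univ.filter (fun γ => q γ < q β) := by
        simp only [mem_filter, mem_univ, true_and, Fin.lt_def]
        exact hle
      rw [lpt, hset, Finset.sum_insert hu', Function.update_of_ne huw,
        Finset.sum_update_of_mem hw', Finset.sdiff_singleton_eq_erase,
        Finset.sum_erase_eq_sub hw', lpt]
      ring
  · have hset : univ.filter (fun γ => q' γ < q' u) = univ.filter (fun γ => q γ ≤ q w) := by
      ext γ
      simp only [mem_filter, mem_univ, true_and, Fin.lt_def, Fin.le_def, hq' γ, hq' u]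
      rw [if_true]
      by_cases hγu : γ = u
      · subst hγu
        rw [if_pos rfl, hu]
        omega
      · rw [if_neg hγu]
        by_cases hc : (q γ : ℕ) ≤ (q w : ℕ)
        · rw [if_pos hc]; omega
        · rw [if_neg hc]; omega
    have : univ.filter (fun γ => q γ ≤ q w) = insert w (univ.filter (fun γ => q γ < q w)) :=
      filter_le_eq_insert hq w
    rw [lpt, hset, this, Finset.sum_insert (by simp), Function.update_self]
    have hcongr : ∀ γ ∈ univ.filter (fun γ => q γ < q w),
        Function.update len w (len w - len u) γ = len γ := by
      intro γ hγ
      simp only [mem_filter, mem_univ, true_and] at hγ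
      exact Function.update_of_ne (fun he => by subst he; exact lt_irrefl _ hγ) _ _
    rw [Finset.sum_congr rfl hcongr, lpt]
    ring
  · intro a b hab
    have h := congrArg Fin.val hab
    rw [hq' a, hq' b] at h
    have ha' := (q a).isLt
    have hb' := (q b).isLt
    by_cases hau : a = u <;> by_cases hbu : b = u
    · rw [hau, hbu]
    · exfalso
      rw [if_pos hau, if_neg hbu] at h
      split_ifs at h <;> omega
    · exfalso
      rw [if_neg hau, if_pos hbu] at h
      split_ifs at h <;> omega
    · rw [if_neg hau, if_neg hbu] at h
      split_ifs at h with h1 h2 h2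
      · exact hq (Fin.val_injective h)
      · omega
      · omega
      · exact hq (Fin.val_injective (by omega))

/-- the unmodified side of a Rauzy-Veech step: `w` on top, so updating
the length of `w` does not change any left endpoint. -/
lemma pside_lpt {p : A → Fin d} {len : A → ℝ} {w : A} (hw : (p w : ℕ) = d - 1)
    (c : ℝ) (β : A) : lpt p (Function.update len w c) β = lpt p len β := by
  apply Finset.sum_congr rfl
  intro γ hγ
  simp only [mem_filter, mem_univ, true_and] at hγ
  apply Function.update_of_ne
  intro he; subst he
  have := (p β).isLt
  have := Fin.lt_def.mp hγ
  omega

/-- the standing invariant along the algorithm -/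
def Good' (D : IEMData A d) : Prop :=
  Function.Injective D.p0 ∧ Function.Injective D.p1 ∧ ∀ α, 0 < D.len α

/-- uniform packaging of one Rauzy-Veech step -/
def StepPack (D D' : IEMData A d) (w u : A) : Prop :=
  Good' D' ∧ totalLen D' = totalLen D - D.len u ∧ u ≠ w ∧ 0 < D.len u ∧
  (∀ β, β ≠ u → leftPt0 D' β = leftPt0 D β ∧ leftPt1 D' β = leftPt1 D β ∧
    D'.len β ≤ D.len β) ∧
  (∀ x ∈ Iset D' u, ∃ γ0 γ1 : A, ((γ0 = u ∧ γ1 = w) ∨ (γ0 = w ∧ γ1 = u)) ∧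
     x ∈ Iset D γ0 ∧
     (x - leftPt0 D γ0 + leftPt1 D γ0) ∈ Iset D γ1 ∧
     totalLen D' ≤ x - leftPt0 D γ0 + leftPt1 D γ0 ∧
     (x - leftPt0 D γ0 + leftPt1 D γ0) - leftPt0 D γ1 + leftPt1 D γ1
       = x - leftPt0 D' u + leftPt1 D' u)

lemma rvstep_pack {D D' : IEMData A d} {ε : Bool} {w u : A}
    (h : RVStep D D' ε w u) (hg : Good' D) : StepPack D D' w u := by
  obtain ⟨h1, h2, h3, h4, h5, h6⟩ := h
  obtain ⟨hg0, hg1, hglen⟩ := hg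
  have huw : u ≠ w := fun he => absurd h3 (by rw [he]; exact lt_irrefl _)
  have hlen' : ∀ α, 0 < D'.len α := by
    intro α
    rw [h4]
    by_cases hα : α = w
    · subst hα; rw [Function.update_self]; linarith
    · rw [Function.update_of_ne hα]; exact hglen α
  have htot : totalLen D' = totalLen D - D.len u := by
    rw [totalLen, totalLen, h4, Finset.sum_update_of_mem (mem_univ w),
      Finset.sdiff_singleton_eq_erase, Finset.sum_erase_eq_sub (mem_univ w)]
    ring
  have hlenle : ∀ β, β ≠ u → D'.len β ≤ D.len β := by
    intro β _
    rw [h4]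
    by_cases hβ : β = w
    · subst hβ; rw [Function.update_self]; linarith [hglen u]
    · rw [Function.update_of_ne hβ]
  have hlenu : D'.len u = D.len u := by rw [h4, Function.update_of_ne huw]
  cases ε
  · -- type 0 : winner on the p0 side, p1 modified
    replace h1 : (D.p0 w : ℕ) = d - 1 := h1
    replace h2 : (D.p1 u : ℕ) = d - 1 := h2
    replace h5 : D'.p0 = D.p0 := h5
    replace h6 : ∀ α, ((D'.p1 α : ℕ)) = if α = u then (D.p1 w : ℕ) + 1
      else if (D.p1 α : ℕ) ≤ (D.p1 w : ℕ) then (D.p1 α : ℕ) else (D.p1 α : ℕ) + 1 := h6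
    obtain ⟨hqa, hqb, hqc⟩ := qside_lpt (len := D.len) hg1 huw h2 h6
    have hp0 : ∀ β, leftPt0 D' β = leftPt0 D β := by
      intro β
      rw [leftPt0_eq, leftPt0_eq, h5, h4, pside_lpt h1]
    have hp1 : ∀ β, β ≠ u → leftPt1 D' β = leftPt1 D β := by
      intro β hβ
      rw [leftPt1_eq, leftPt1_eq, h4, hqa β hβ]
    have hp1u : leftPt1 D' u = leftPt1 D w + (D.len w - D.len u) := by
      rw [leftPt1_eq, leftPt1_eq, h4, hqb]
    refine ⟨⟨by rw [h5]; exact hg0, hqc, hlen'⟩, htot, huw, hglen u, ?_, ?_⟩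
    · exact fun β hβ => ⟨hp0 β, hp1 β hβ, hlenle β hβ⟩
    · intro x hx
      rw [Iset, hp0 u, hlenu] at hx
      have hl1u : leftPt1 D u = totalLen D - D.len u := by
        rw [leftPt1_eq, totalLen, lpt_top hg1 h2]
      have hl0w : leftPt0 D w = totalLen D - D.len w := by
        rw [leftPt0_eq, totalLen, lpt_top hg0 h1]
      refine ⟨u, w, Or.inl ⟨rfl, rfl⟩, hx, ⟨?_, ?_⟩, ?_, ?_⟩
      · rw [hl0w, hl1u]
        have := hx.1
        linarith
      · rw [hl0w, hl1u]
        have := hx.2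
        linarith
      · rw [htot, hl1u]
        have := hx.1
        linarith
      · rw [hp0 u, hp1u, hl1u, hl0w]
        ring
  · -- type 1 : winner on the p1 side, p0 modified
    replace h1 : (D.p1 w : ℕ) = d - 1 := h1
    replace h2 : (D.p0 u : ℕ) = d - 1 := h2
    replace h5 : D'.p1 = D.p1 := h5
    replace h6 : ∀ α, ((D'.p0 α : ℕ)) = if α = u then (D.p0 w : ℕ) + 1
      else if (D.p0 α : ℕ) ≤ (D.p0 w : ℕ) then (D.p0 α : ℕ) else (D.p0 α : ℕ) + 1 := h6
    obtain ⟨hqa, hqb, hqc⟩ := qside_lpt (len := D.len) hg0 huw h2 h6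
    have hp1 : ∀ β, leftPt1 D' β = leftPt1 D β := by
      intro β
      rw [leftPt1_eq, leftPt1_eq, h5, h4, pside_lpt h1]
    have hp0 : ∀ β, β ≠ u → leftPt0 D' β = leftPt0 D β := by
      intro β hβ
      rw [leftPt0_eq, leftPt0_eq, h4, hqa β hβ]
    have hp0u : leftPt0 D' u = leftPt0 D w + (D.len w - D.len u) := by
      rw [leftPt0_eq, leftPt0_eq, h4, hqb]
    refine ⟨⟨hqc, by rw [h5]; exact hg1, hlen'⟩, htot, huw, hglen u, ?_, ?_⟩
    · exact fun β hβ => ⟨hp0 β hβ, hp1 β, hlenle β hβ⟩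
    · intro x hx
      rw [Iset, hp0u, hlenu] at hx
      have hl1w : leftPt1 D w = totalLen D - D.len w := by
        rw [leftPt1_eq, totalLen, lpt_top hg1 h1]
      have hl0u : leftPt0 D u = totalLen D - D.len u := by
        rw [leftPt0_eq, totalLen, lpt_top hg0 h2]
      refine ⟨w, u, Or.inr ⟨rfl, rfl⟩, ⟨?_, ?_⟩, ⟨?_, ?_⟩, ?_, ?_⟩
      · have := hx.1
        linarith
      · have := hx.2
        linarith
      · rw [hl0u, hl1w]
        have := hx.1
        linarith
      · rw [hl0u, hl1w]
        have := hx.2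
        linarith
      · rw [htot, hl1w]
        have := hx.1
        linarith
      · rw [hp0u, hp1 u, hl1w, hl0u]
        ring


/-- a point of `I_α` is mapped into `[0, totalLen)` -/
lemma img_mem {D : IEMData A d} (hg : Good' D) {β : A} {x : ℝ} (hx : x ∈ Iset D β) :
    x - leftPt0 D β + leftPt1 D β ∈ Set.Ico (0 : ℝ) (totalLen D) := by
  obtain ⟨hg0, hg1, hlen⟩ := hg
  have h1 : (0:ℝ) ≤ leftPt1 D β := lpt_nonneg hlen β
  have h2 : leftPt1 D β + D.len β ≤ totalLen D := lpt_add_len_le hg1 hlen β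
  have := hx.1
  have := hx.2
  constructor <;> [linarith; linarith]

open scoped Classical

lemma colSum_def (Q : Matrix A A ℕ) (β : A) : (∑ α, Q α β) = ∑ α, Q α β := rfl

lemma prodMat_self (E : ℕ → Matrix A A ℕ) (a : ℕ) : prodMat E a a = 1 := by
  simp [prodMat]

lemma prodMat_succ (E : ℕ → Matrix A A ℕ) {a j : ℕ} (h : a ≤ j) :
    prodMat E a (j + 1) = prodMat E a j * E j := by
  rw [prodMat, prodMat]
  have h1 : j + 1 - a = (j - a) + 1 := by omega
  rw [h1, List.range'_concat, List.map_append, List.prod_append]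
  simp [Nat.add_sub_cancel' h]

lemma mul_stepMat (Q : Matrix A A ℕ) (w u α β : A) :
    (Q * stepMat w u) α β = Q α β + if β = u then Q α w else 0 := by
  rw [stepMat, Matrix.mul_add, Matrix.mul_one, Matrix.add_apply]
  congr 1
  rw [Matrix.mul_apply]
  by_cases hβ : β = u
  · subst hβ
    rw [if_pos rfl]
    rw [Finset.sum_eq_single w]
    · simp [Matrix.single]
    · intro γ _ hγ
      simp [Matrix.single, Ne.symm hγ]
    · simp
  · rw [if_neg hβ]
    apply Finset.sum_eq_zero
    intro γ _
    have hc : ¬(w = γ ∧ u = β) := fun hc => hβ hc.2.symm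
    simp [Matrix.single, hc]

lemma sum_one_col (β : A) : (∑ α, (1 : Matrix A A ℕ) α β) = 1 := by
  simp [Matrix.one_apply]

lemma sum_mul_step_col (Q : Matrix A A ℕ) (w u β : A) :
    (∑ α, (Q * stepMat w u) α β)
      = (∑ α, Q α β) + if β = u then (∑ α, Q α w) else 0 := by
  simp only [mul_stepMat, Finset.sum_add_distrib]
  congr 1
  by_cases hβ : β = u <;> simp [hβ]

lemma card_filter_range_add (P : ℕ → Prop) (a b : ℕ) :
    ((Finset.range (a + b)).filter P).card
      = ((Finset.range a).filter P).card
        + ((Finset.range b).filter (fun l => P (a + l))).card := by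
  induction b with
  | zero => simp
  | succ b ih =>
    have hnot : ∀ (n : ℕ) (Q : ℕ → Prop), n ∉ (Finset.range n).filter Q := by
      intro n Q hmem
      exact absurd (Finset.mem_range.mp (Finset.mem_filter.mp hmem).1) (lt_irrefl n)
    rw [Nat.add_succ, Finset.range_add_one, Finset.range_add_one, Finset.filter_insert,
      Finset.filter_insert]
    by_cases h : P (a + b)
    · rw [if_pos h, if_pos h, Finset.card_insert_of_notMem (hnot _ _),
        Finset.card_insert_of_notMem (hnot _ _), ih]
      omega
    · rw [if_neg h, if_neg h, ih]

/-- the invariant holds along the whole algorithm -/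
lemma good_all (Z : ZorichData A d)
    (hRV : ∀ j, RVStep (Z.D j) (Z.D (j + 1)) (Z.eps j) (Z.win j) (Z.los j))
    (hg0 : Good' (Z.D 0)) : ∀ j, Good' (Z.D j) := by
  intro j
  induction j with
  | zero => exact hg0
  | succ j ih => exact (rvstep_pack (hRV j) ih).1

/-- main induction : the return-time and visit-count statement from level
`kk m` to an arbitrary later level `j` of the (unaccelerated) algorithm. -/
lemma ret (Z : ZorichData A d)
    (hRV : ∀ j, RVStep (Z.D j) (Z.D (j + 1)) (Z.eps j) (Z.win j) (Z.los j))
    (hgood : ∀ j, Good' (Z.D j))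
    (m : ℕ) (T : ℝ → ℝ) (hT : IsIEMOf T (Z.D (Z.kk m))) :
    ∀ j, Z.kk m ≤ j → ∀ β : A, ∀ x ∈ Iset (Z.D j) β,
      (∀ l : ℕ, 0 < l →
          l < (∑ α, prodMat (fun i => stepMat (Z.win i) (Z.los i)) (Z.kk m) j α β) →
        T^[l] x ∉ Set.Ico (0 : ℝ) (totalLen (Z.D j))) ∧
      T^[∑ α, prodMat (fun i => stepMat (Z.win i) (Z.los i)) (Z.kk m) j α β] x
        = x - leftPt0 (Z.D j) β + leftPt1 (Z.D j) β ∧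
      (∀ α : A,
        ((Finset.range (∑ γ, prodMat (fun i => stepMat (Z.win i) (Z.los i)) (Z.kk m) j γ β)).filter
          (fun l => T^[l] x ∈ Iset (Z.D (Z.kk m)) α)).card
          = prodMat (fun i => stepMat (Z.win i) (Z.los i)) (Z.kk m) j α β) := by
  intro j hj
  induction j, hj using Nat.le_induction with
  | base =>
    intro β x hx
    simp only [prodMat_self, sum_one_col]
    refine ⟨fun l h0 h1 => absurd h1 (by omega), ?_, ?_⟩
    · rw [Function.iterate_one]
      exact hT β x hx
    · intro α
      rw [Finset.range_one, Finset.filter_singleton, Function.iterate_zero, id_eq,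
        Matrix.one_apply]
      by_cases hmem : x ∈ Iset (Z.D (Z.kk m)) α
      · have hαβ : α = β := lpt_unique (hgood (Z.kk m)).1 (hgood (Z.kk m)).2.2 hmem hx
        rw [if_pos hmem, if_pos hαβ, Finset.card_singleton]
      · have hαβ : ¬ α = β := fun he => hmem (he ▸ hx)
        rw [if_neg hmem, if_neg hαβ, Finset.card_empty]
  | succ j hj ih =>
    intro β x hx
    have hpack := rvstep_pack (hRV j) (hgood j)
    obtain ⟨hg', htot, huw, hlu, hmain, hu4⟩ := hpack
    have hQ : prodMat (fun i => stepMat (Z.win i) (Z.los i)) (Z.kk m) (j + 1)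
        = prodMat (fun i => stepMat (Z.win i) (Z.los i)) (Z.kk m) j
          * stepMat (Z.win j) (Z.los j) := prodMat_succ _ hj
    set Q := prodMat (fun i => stepMat (Z.win i) (Z.los i)) (Z.kk m) j with hQdef
    have hIcoSub : Set.Ico (0:ℝ) (totalLen (Z.D (j+1))) ⊆ Set.Ico (0:ℝ) (totalLen (Z.D j)) := by
      apply Set.Ico_subset_Ico_right
      rw [htot]
      linarith
    by_cases hβ : β = Z.los j
    · -- the doubled column
      subst hβ
      obtain ⟨γ0, γ1, hγ, hx0, hy1, hy1out, hval⟩ := hu4 x hx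
      obtain ⟨ih1a, ih2a, ih3a⟩ := ih γ0 x hx0
      set y1 := x - leftPt0 (Z.D j) γ0 + leftPt1 (Z.D j) γ0 with hy1def
      obtain ⟨ih1b, ih2b, ih3b⟩ := ih γ1 y1 hy1
      set a := ∑ α, Q α γ0 with hadef
      set b := ∑ α, Q α γ1 with hbdef
      have hcs : (∑ α, prodMat (fun i => stepMat (Z.win i) (Z.los i)) (Z.kk m) (j+1) α (Z.los j))
          = a + b := by
        rw [hQ, sum_mul_step_col, if_pos rfl]
        rcases hγ with ⟨rfl, rfl⟩ | ⟨rfl, rfl⟩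
        · rfl
        · exact Nat.add_comm _ _
      have hTa : T^[a] x = y1 := ih2a
      have hTab : T^[a + b] x = y1 - leftPt0 (Z.D j) γ1 + leftPt1 (Z.D j) γ1 := by
        rw [Nat.add_comm, Function.iterate_add_apply, hTa, ih2b]
      refine ⟨?_, ?_, ?_⟩
      · intro l h0 hl
        rw [hcs] at hl
        rcases lt_trichotomy l a with hla | hla | hla
        · exact fun hmem => ih1a l h0 hla (hIcoSub hmem)
        · subst hla
          rw [hTa]
          intro hmem
          exact absurd hmem.2 (not_lt.mpr hy1out)
        · have h0' : 0 < l - a := by omega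
          have hl' : l - a < b := by omega
          have : T^[l] x = T^[l - a] y1 := by
            rw [← hTa, ← Function.iterate_add_apply]
            congr 1
            omega
          rw [this]
          exact fun hmem => ih1b (l - a) h0' hl' (hIcoSub hmem)
      · rw [hcs, hTab, hval]
      · intro α
        rw [hcs, card_filter_range_add]
        have hshift : ((Finset.range b).filter
            (fun l => T^[a + l] x ∈ Iset (Z.D (Z.kk m)) α)).card
            = ((Finset.range b).filter
              (fun l => T^[l] y1 ∈ Iset (Z.D (Z.kk m)) α)).card := by
          congr 1
          apply Finset.filter_congr
          intro l _
          rw [Nat.add_comm, Function.iterate_add_apply, hTa]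
        rw [hshift, ih3a α, ih3b α, hQ, mul_stepMat, if_pos rfl]
        rcases hγ with ⟨rfl, rfl⟩ | ⟨rfl, rfl⟩
        · rfl
        · exact Nat.add_comm _ _
    · -- the untouched columns
      have hsub : x ∈ Iset (Z.D j) β := by
        obtain ⟨he0, _, hele⟩ := hmain β hβ
        rw [Iset] at hx ⊢
        rw [he0] at hx
        exact ⟨hx.1, lt_of_lt_of_le hx.2 (by linarith)⟩
      obtain ⟨ih1, ih2, ih3⟩ := ih β x hsub
      have hcs : (∑ α, prodMat (fun i => stepMat (Z.win i) (Z.los i)) (Z.kk m) (j+1) α β)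
          = ∑ α, Q α β := by
        rw [hQ, sum_mul_step_col, if_neg hβ, Nat.add_zero]
      refine ⟨?_, ?_, ?_⟩
      · intro l h0 hl
        rw [hcs] at hl
        exact fun hmem => ih1 l h0 hl (hIcoSub hmem)
      · rw [hcs, ih2, (hmain β hβ).1, (hmain β hβ).2.1]
      · intro α
        rw [hcs, ih3 α, hQ, mul_stepMat, if_neg hβ, Nat.add_zero]


end IEMAux

open scoped Classical

open IEM Finset in
/-- for `m < n`, the accelerated map `T(n)` is the first
return map of `T(m)` to `I(n) = [0, Σ_α λ_α(n))`; for `x ∈ I_β(n)` the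
return time is `Q_β(m,n) = Σ_α Q_{αβ}(m,n)`, and the number of
`0 ≤ l < Q_β(m,n)` with `(T(m))^l(x) ∈ I_α(m)` equals `Q_{αβ}(m,n)`. -/
theorem zorich_first_return_times
    {A : Type} [Fintype A] [DecidableEq A] {d : ℕ}
    (hd : 2 ≤ d) (hcard : Fintype.card A = d)
    (Z : ZorichData A d) (hZ : ZorichOK Z)
    (hK : KeaneCond (Z.Tn 0) (Z.D 0)) :
    ∀ m n : ℕ, m < n → ∀ β : A, ∀ x ∈ Iset (Z.D (Z.kk n)) β,
      (∀ l : ℕ, 0 < l → l < ∑ α, Qacc Z m n α β →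
        (Z.Tn m)^[l] x ∉ Set.Ico (0 : ℝ) (totalLen (Z.D (Z.kk n)))) ∧
      (Z.Tn m)^[∑ α, Qacc Z m n α β] x ∈
        Set.Ico (0 : ℝ) (totalLen (Z.D (Z.kk n))) ∧
      (Z.Tn m)^[∑ α, Qacc Z m n α β] x = Z.Tn n x ∧
      (∀ α : A,
        ((Finset.range (∑ γ, Qacc Z m n γ β)).filter
          (fun l => (Z.Tn m)^[l] x ∈ Iset (Z.D (Z.kk m)) α)).card
          = Qacc Z m n α β) := by
  intro m n hmn β x hx
  simp only [Qacc]
  obtain ⟨hGD, hRV, hk0, hkmono, _, _, hTn⟩ := hZ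
  have hg0 : IEMAux.Good' (Z.D 0) := ⟨hGD.1.1, hGD.2.1.1, hGD.2.2.1⟩
  have hgood := IEMAux.good_all Z hRV hg0
  have hkk : Z.kk m ≤ Z.kk n :=
    ((strictMono_nat_of_lt_succ hkmono).le_iff_le.mpr (le_of_lt hmn))
  obtain ⟨r1, r2, r3⟩ :=
    IEMAux.ret Z hRV hgood m (Z.Tn m) (hTn m) (Z.kk n) hkk β x hx
  refine ⟨r1, ?_, ?_, r3⟩
  · rw [r2]
    exact IEMAux.img_mem (hgood (Z.kk n)) hx
  · rw [r2]
    exact (hTn n β x hx).symm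
end
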